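/- arXiv:2505.11193 — 5 statements merged into one kernel-verified Lean document; each statement's English description precedes it below -/
import Mathlib

section
/- Let T be a finite tree and r a nonnegative integer such that 2r+1 < diam(T). Then the (2r)-relaxed metric dimension of T equals its (2r+1)-relaxed metric dimension: MD_{2r}(T) = MD_{2r+1}(T). -/
open SimpleGraph

/-- The number of neighbours of `v` (in `G`) that lie in the vertex set `A`:
the degree of `v` in the subgraph of `G` induced by `A`. -/
def degIn {V : Type*} [DecidableEq V] (G : SimpleGraph V) [DecidableRel G.Adj]
    (A : Finset V) (v : V) : ℕ :=
  (A.filter fun w => G.Adj v w).card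

/-- Iterated stemming of the vertex set `A`: at each step remove the vertices of
(induced) degree at most 1. -/
def stemIter {V : Type*} [DecidableEq V] (G : SimpleGraph V) [DecidableRel G.Adj]
    (A : Finset V) : ℕ → Finset V
  | 0 => A
  | r + 1 => (stemIter G A r).filter fun v => 1 < degIn G (stemIter G A r) v

/-- The vertex set of `Stem_r(G)`. -/
def stemSet {V : Type*} [Fintype V] [DecidableEq V] (G : SimpleGraph V) [DecidableRel G.Adj]
    (r : ℕ) : Finset V :=
  stemIter G Finset.univ r

/-- Iterated down-stemming of the vertex set `A` of a rooted graph: at each step remove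
the vertices of (induced) degree at most 1, but always keep the root. -/
def downStemIter {V : Type*} [DecidableEq V] (G : SimpleGraph V) [DecidableRel G.Adj]
    (root : V) (A : Finset V) : ℕ → Finset V
  | 0 => A
  | r + 1 => (downStemIter G root A r).filter
      fun v => v = root ∨ 1 < degIn G (downStemIter G root A r) v

/-- In the subgraph of `G` induced by `A`, there is a leaf path from `v` to the leaf `u`:
a path from `v` to `u` inside `A`, all of whose internal vertices have induced degree 2,
ending at a vertex `u` of induced degree 1. -/
def IsLeafPathIn {V : Type*} [DecidableEq V] (G : SimpleGraph V) [DecidableRel G.Adj]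
    (A : Finset V) (v u : V) : Prop :=
  ∃ p : G.Walk v u, p.IsPath ∧ 0 < p.length ∧ (∀ w ∈ p.support, w ∈ A) ∧
    degIn G A u = 1 ∧ ∀ w ∈ p.support, w ≠ v → w ≠ u → degIn G A w = 2

/-- `v` is an exterior major vertex of the subgraph of `G` induced by `A`:
it has induced degree at least 3 and at least one adjacent leaf path. -/
def IsExtMajorIn {V : Type*} [DecidableEq V] (G : SimpleGraph V) [DecidableRel G.Adj]
    (A : Finset V) (v : V) : Prop :=
  v ∈ A ∧ 3 ≤ degIn G A v ∧ ∃ u, IsLeafPathIn G A v u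

/-- The number of exterior major vertices of the subgraph of `G` induced by `A`. -/
noncomputable def exIn {V : Type*} [DecidableEq V] (G : SimpleGraph V) [DecidableRel G.Adj]
    (A : Finset V) : ℕ :=
  {v | IsExtMajorIn G A v}.ncard

/-- The leaves (vertices of induced degree 1) of the subgraph of `G` induced by `A`. -/
def leavesIn {V : Type*} [DecidableEq V] (G : SimpleGraph V) [DecidableRel G.Adj]
    (A : Finset V) : Finset V :=
  A.filter fun v => degIn G A v = 1

/-- The number of leaves of the subgraph of `G` induced by `A`. -/
def sigmaIn {V : Type*} [DecidableEq V] (G : SimpleGraph V) [DecidableRel G.Adj]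
    (A : Finset V) : ℕ :=
  (leavesIn G A).card

/-- The subgraph of `G` induced by `A` is a path graph (possibly empty). -/
def IsPathGraphOn {V : Type*} (G : SimpleGraph V) (A : Finset V) : Prop :=
  ∃ n, Nonempty ((G.induce (A : Set V)) ≃g pathGraph n)

/-- `S` is a `k`-relaxed resolving set of `G`: any two vertices with the same
identification vector (distances to the vertices of `S`) are at distance at most `k`. -/
def IsRelaxedResolving {V : Type*} (G : SimpleGraph V) (k : ℕ) (S : Set V) : Prop :=
  ∀ u v : V, (∀ s ∈ S, G.dist u s = G.dist v s) → G.dist u v ≤ k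

/-- The `k`-relaxed metric dimension of `G`: the minimum cardinality of a `k`-relaxed
resolving set. -/
noncomputable def MDk {V : Type*} (G : SimpleGraph V) (k : ℕ) : ℕ :=
  sInf {n | ∃ S : Finset V, IsRelaxedResolving G k ↑S ∧ S.card = n}

/-- The set of descendants of `v` in the tree `G` rooted at `root` (including `v` itself):
the vertices `w` such that `v` lies on the path from `root` to `w`. -/
noncomputable def descSet {V : Type*} [Fintype V] (G : SimpleGraph V) (root v : V) :
    Finset V :=
  Finset.univ.filter fun w => G.dist root v + G.dist v w = G.dist root w

/-- The height of the subtree `T_v` of the tree `G` rooted at `root`: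
the maximal distance from `v` to one of its descendants. -/
noncomputable def heightAt {V : Type*} [Fintype V] (G : SimpleGraph V) (root v : V) : ℕ :=
  (descSet G root v).sup (G.dist v)

/-- `N^L_r(T)`: the number of vertices `v` whose subtree `T_v` has height exactly `r`. -/
noncomputable def NL {V : Type*} [Fintype V] (G : SimpleGraph V) (root : V) (r : ℕ) : ℕ :=
  (Finset.univ.filter fun v => heightAt G root v = r).card

/-- The subtree property `P^E_r` at `v`: in `Down-Stem_r(T_v)` the root `v` has degree at
least two, and at least one of its child subtrees is a path to a leaf. -/
noncomputable def NEprop {V : Type*} [Fintype V] [DecidableEq V] (G : SimpleGraph V)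
    [DecidableRel G.Adj] (root : V) (r : ℕ) (v : V) : Prop :=
  2 ≤ degIn G (downStemIter G v (descSet G root v) r) v ∧
    ∃ u, IsLeafPathIn G (downStemIter G v (descSet G root v) r) v u

/-- `N^E_r(T)`: the number of vertices satisfying the subtree property `P^E_r`. -/
noncomputable def NE {V : Type*} [Fintype V] [DecidableEq V] (G : SimpleGraph V)
    [DecidableRel G.Adj] (root : V) (r : ℕ) : ℕ :=
  {v | NEprop G root r v}.ncard

/-- In a tree, the distances from two adjacent vertices to any vertex have opposite parity. -/
lemma tree_adj_parity {V : Type*} {T : SimpleGraph V} (hT : T.IsTree) {a b : V}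
    (hab : T.Adj a b) (s : V) : (T.dist a s + T.dist b s) % 2 = 1 := by
  classical
  have hc := hT.isConnected
  obtain ⟨p, hp, hpl⟩ := (hc.preconnected a s).exists_path_of_dist
  obtain ⟨q, hq, hql⟩ := (hc.preconnected b s).exists_path_of_dist
  have hab1 : T.dist a b = 1 := dist_eq_one_iff_adj.mpr hab
  have htri1 : T.dist a s ≤ T.dist a b + T.dist b s := hc.dist_triangle
  have htri2 : T.dist b s ≤ T.dist b a + T.dist a s := hc.dist_triangle
  have hba1 : T.dist b a = 1 := dist_eq_one_iff_adj.mpr hab.symm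
  by_contra hpar
  have heq : T.dist a s = T.dist b s := by omega
  by_cases hb : b ∈ p.support
  · have h2 : T.dist b s ≤ (p.dropUntil b hb).length := T.dist_le _
    have h3 : T.dist a b ≤ (p.takeUntil b hb).length := T.dist_le _
    have h4 : (p.takeUntil b hb).length + (p.dropUntil b hb).length = p.length := by
      rw [← Walk.length_append, p.take_spec hb]
    omega
  · have hpath : (Walk.cons hab.symm p).IsPath := (Walk.cons_isPath_iff _ _).2 ⟨hp, hb⟩
    have huniq : (Walk.cons hab.symm p) = q := (hT.existsUnique_path b s).unique hpath hq
    have hlen : (Walk.cons hab.symm p).length = q.length := by rw [huniq]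
    simp only [Walk.length_cons] at hlen
    omega

/-- Along any walk in a tree, distance to a fixed vertex changes parity at each step. -/
lemma tree_walk_parity {V : Type*} {T : SimpleGraph V} (hT : T.IsTree) (s : V) :
    ∀ {u v : V} (p : T.Walk u v), (T.dist u s + p.length) % 2 = T.dist v s % 2 := by
  intro u v p
  induction p with
  | nil => simp
  | @cons u w v h q ih =>
    have hstep := tree_adj_parity hT h s
    simp only [Walk.length_cons] at *
    omega

/-- In a tree, two vertices equidistant from some vertex are at even distance. -/
lemma tree_dist_parity {V : Type*} {T : SimpleGraph V} (hT : T.IsTree) (u v s : V)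
    (h : T.dist u s = T.dist v s) : T.dist u v % 2 = 0 := by
  obtain ⟨p, hp, hpl⟩ := (hT.isConnected.preconnected u v).exists_path_of_dist
  have := tree_walk_parity hT s p
  omega

/-- For a finite tree `T` with `2r+1 < diam(T)`, the `2r`-relaxed and
`(2r+1)`-relaxed metric dimensions of `T` coincide. -/
theorem stmt_0 {V : Type*} [Fintype V] [DecidableEq V] (T : SimpleGraph V)
    [DecidableRel T.Adj] (hT : T.IsTree) (r : ℕ) (hdiam : 2 * r + 1 < T.diam) :
    MDk T (2 * r) = MDk T (2 * r + 1) := by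
  have hnz : T.diam ≠ 0 := by omega
  have hnt : Nontrivial V := T.nontrivial_of_diam_ne_zero hnz
  obtain ⟨x, y, hxy⟩ := T.exists_dist_eq_diam
  have hSne : ∀ S : Set V, IsRelaxedResolving T (2 * r + 1) S → S.Nonempty := by
    intro S hS
    rcases S.eq_empty_or_nonempty with h | h
    · exfalso
      have := hS x y (by simp [h])
      omega
    · exact h
  have key : ∀ S : Set V, IsRelaxedResolving T (2 * r + 1) S ↔ IsRelaxedResolving T (2 * r) S := by
    intro S
    constructor
    · intro hS u v huv
      have h1 := hS u v huv
      obtain ⟨s, hs⟩ := hSne S hS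
      have h2 := tree_dist_parity hT u v s (huv s hs)
      omega
    · intro hS u v huv
      exact (hS u v huv).trans (by omega)
  unfold MDk
  congr 1
  ext n
  simp only [Set.mem_setOf_eq]
  constructor
  · rintro ⟨S, hS, rfl⟩
    exact ⟨S, (key ↑S).mpr hS, rfl⟩
  · rintro ⟨S, hS, rfl⟩
    exact ⟨S, (key ↑S).mp hS, rfl⟩
end

section
/- Let T be a finite tree and r a nonnegative integer such that 2r < diam(T). Then the (2r)-relaxed metric dimension of T equals the ordinary metric dimension of its r-stem: MD_{2r}(T) = MD(Stem_r(T)). -/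
open SimpleGraph

namespace StemAux
variable {V : Type*} {G : SimpleGraph V}

/-- `m` lies on a geodesic between `x` and `y`. -/
def Btw (G : SimpleGraph V) (x m y : V) : Prop :=
  G.dist x m + G.dist m y = G.dist x y

lemma btw_comm {x m y : V} : Btw G x m y ↔ Btw G y m x := by
  unfold Btw
  have h1 : G.dist x m = G.dist m x := SimpleGraph.dist_comm
  have h2 : G.dist m y = G.dist y m := SimpleGraph.dist_comm
  have h3 : G.dist x y = G.dist y x := SimpleGraph.dist_comm
  omega

lemma btw_left (x y : V) : Btw G x x y := by simp [Btw]

lemma btw_right (x y : V) : Btw G x y y := by simp [Btw]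

/-- A walk between indexed vertices of a walk. -/
lemma exists_walk_between {u v : V} (p : G.Walk u v) :
    ∀ i j, i ≤ j → j ≤ p.length →
      ∃ q : G.Walk (p.getVert i) (p.getVert j), q.length = j - i := by
  induction p with
  | nil =>
    intro i j _ hj
    simp only [SimpleGraph.Walk.length_nil, Nat.le_zero] at hj
    subst hj
    interval_cases i
    exact ⟨.nil, rfl⟩
  | cons h p ih =>
    intro i j hij hj
    match i, j with
    | 0, 0 => exact ⟨.nil, rfl⟩
    | 0, (j+1) =>
      obtain ⟨q, hq⟩ := ih 0 j (Nat.zero_le _) (by simpa using hj)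
      rw [SimpleGraph.Walk.getVert_cons_succ]
      refine ⟨(q.copy (SimpleGraph.Walk.getVert_zero p) rfl).cons h, ?_⟩
      have hl := SimpleGraph.Walk.length_copy q (SimpleGraph.Walk.getVert_zero p) rfl
      exact (congrArg (· + 1) hl).trans (show q.length + 1 = j + 1 - 0 by omega)
    | (i+1), (j+1) =>
      obtain ⟨q, hq⟩ := ih i j (by omega) (by simpa using hj)
      rw [SimpleGraph.Walk.getVert_cons_succ, SimpleGraph.Walk.getVert_cons_succ]
      exact ⟨q, by omega⟩

/-- On a shortest walk, distance from the start to the `i`-th vertex is `i`. -/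
lemma dist_getVert_left (hc : G.Connected) {x y : V} (P : G.Walk x y)
    (hP : P.length = G.dist x y) {i : ℕ} (hi : i ≤ P.length) :
    G.dist x (P.getVert i) = i ∧ G.dist (P.getVert i) y = P.length - i := by
  obtain ⟨q1, hq1⟩ := exists_walk_between P 0 i (Nat.zero_le _) hi
  obtain ⟨q2, hq2⟩ := exists_walk_between P i P.length hi le_rfl
  have h1 : G.dist x (P.getVert i) ≤ i := by
    have h := SimpleGraph.dist_le q1
    rw [hq1] at h
    have he : P.getVert 0 = x := SimpleGraph.Walk.getVert_zero P
    rw [he] at h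
    omega
  have h2 : G.dist (P.getVert i) y ≤ P.length - i := by
    have h := SimpleGraph.dist_le q2
    rw [hq2] at h
    have he : P.getVert P.length = y := SimpleGraph.Walk.getVert_length P
    rw [he] at h
    exact h
  have h3 := hc.dist_triangle (u := x) (v := P.getVert i) (w := y)
  omega

lemma dist_getVert_getVert (hc : G.Connected) {x y : V} (P : G.Walk x y)
    (hP : P.length = G.dist x y) {i j : ℕ} (hij : i ≤ j) (hj : j ≤ P.length) :
    G.dist (P.getVert i) (P.getVert j) = j - i := by
  obtain ⟨q, hq⟩ := exists_walk_between P i j hij hj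
  have h1 : G.dist (P.getVert i) (P.getVert j) ≤ j - i := by
    have := SimpleGraph.dist_le q
    omega
  have h2 := (dist_getVert_left hc P hP (le_trans hij hj)).1
  have h3 := (dist_getVert_left hc P hP hj).1
  have h4 := hc.dist_triangle (u := x) (v := P.getVert i) (w := P.getVert j)
  omega

lemma btw_getVert (hc : G.Connected) {x y : V} (P : G.Walk x y)
    (hP : P.length = G.dist x y) {i : ℕ} (hi : i ≤ P.length) :
    Btw G x (P.getVert i) y := by
  have h := dist_getVert_left hc P hP hi
  unfold Btw
  omega

section Tree
variable (hT : G.IsTree)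
include hT

lemma path_length_eq_dist {u v : V} (p : G.Walk u v) (hp : p.IsPath) :
    p.length = G.dist u v := by
  obtain ⟨q, hq, hql⟩ := hT.isConnected.exists_path_of_dist u v
  have := (hT.existsUnique_path u v).unique hp hq
  rw [this, hql]

lemma paths_unique {u v : V} (p q : G.Walk u v) (hp : p.IsPath) (hq : q.IsPath) : p = q :=
  (hT.existsUnique_path u v).unique hp hq

omit hT

lemma append_isPath {u v w : V} {p : G.Walk u v} {q : G.Walk v w}
    (hp : p.IsPath) (hq : q.IsPath)
    (h : ∀ z, z ∈ p.support → z ∈ q.support → z = v) : (p.append q).IsPath := by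
  rw [SimpleGraph.Walk.isPath_def, SimpleGraph.Walk.support_append]
  apply List.Nodup.append
  · exact (SimpleGraph.Walk.isPath_def _).mp hp
  · exact (((SimpleGraph.Walk.isPath_def _).mp hq).tail)
  · intro z hz1 hz2
    have hz2' : z ∈ q.support := List.mem_of_mem_tail hz2
    have : z = v := h z hz1 hz2'
    subst this
    have hnd : q.support.Nodup := (SimpleGraph.Walk.isPath_def _).mp hq
    rw [SimpleGraph.Walk.support_eq_cons] at hnd
    exact absurd hz2 (List.nodup_cons.mp hnd).1

include hT

lemma btw_of_mem_support {x y z : V} (P : G.Walk x y) (hP : P.length = G.dist x y)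
    (hz : z ∈ P.support) : Btw G x z y := by
  obtain ⟨i, hi, hile⟩ := SimpleGraph.Walk.mem_support_iff_exists_getVert.mp hz
  subst hi
  exact btw_getVert hT.isConnected P hP hile

lemma mem_support_of_btw {x y z : V} (P : G.Walk x y) (hP : P.IsPath)
    (h : Btw G x z y) : z ∈ P.support := by
  obtain ⟨q1, hq1, hq1l⟩ := hT.isConnected.exists_path_of_dist x z
  obtain ⟨q2, hq2, hq2l⟩ := hT.isConnected.exists_path_of_dist z y
  have hlen : (q1.append q2).length = G.dist x y := by
    rw [SimpleGraph.Walk.length_append, hq1l, hq2l]; exact h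
  have hpath : (q1.append q2).IsPath := (q1.append q2).isPath_of_length_eq_dist hlen
  have := paths_unique hT (q1.append q2) P hpath hP
  rw [← this]
  rw [SimpleGraph.Walk.mem_support_append_iff]
  exact Or.inl q1.end_mem_support


end Tree

section Tree2
variable (hT : G.IsTree)
include hT

lemma dist_comm' : ∀ a b : V, G.dist a b = G.dist b a := fun _ _ => SimpleGraph.dist_comm

lemma dist_triangle' : ∀ a b c : V, G.dist a c ≤ G.dist a b + G.dist b c :=
  fun _ _ _ => hT.isConnected.dist_triangle

lemma dist_eq_zero' {a b : V} (h : G.dist a b = 0) : a = b :=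
  (hT.isConnected.dist_eq_zero_iff).mp h

omit hT
lemma dist_self' (a : V) : G.dist a a = 0 := SimpleGraph.dist_self
include hT

/-- Uniqueness of the point at a given distance on a geodesic. -/
lemma btw_dist_unique {x y z₁ z₂ : V} (h₁ : Btw G x z₁ y) (h₂ : Btw G x z₂ y)
    (hd : G.dist x z₁ = G.dist x z₂) : z₁ = z₂ := by
  obtain ⟨P, hP, hPl⟩ := hT.isConnected.exists_path_of_dist x y
  have hm₁ := mem_support_of_btw hT P hP h₁
  have hm₂ := mem_support_of_btw hT P hP h₂
  obtain ⟨i₁, hi₁, hi₁le⟩ := SimpleGraph.Walk.mem_support_iff_exists_getVert.mp hm₁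
  obtain ⟨i₂, hi₂, hi₂le⟩ := SimpleGraph.Walk.mem_support_iff_exists_getVert.mp hm₂
  have e₁ := (dist_getVert_left hT.isConnected P hPl hi₁le).1
  have e₂ := (dist_getVert_left hT.isConnected P hPl hi₂le).1
  rw [hi₁] at e₁; rw [hi₂] at e₂
  have : i₁ = i₂ := by omega
  rw [← hi₁, ← hi₂, this]

/-- Existence of the point at a given distance on a geodesic. -/
lemma exists_btw_dist {x y : V} {j : ℕ} (hj : j ≤ G.dist x y) :
    ∃ z, Btw G x z y ∧ G.dist x z = j := by
  obtain ⟨P, hP, hPl⟩ := hT.isConnected.exists_path_of_dist x y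
  have hj' : j ≤ P.length := by omega
  exact ⟨P.getVert j, btw_getVert hT.isConnected P hPl hj',
    (dist_getVert_left hT.isConnected P hPl hj').1⟩

/-- Ordering of two points on a geodesic. -/
lemma btw_order {x y a b : V} (ha : Btw G x a y) (hb : Btw G x b y)
    (hd : G.dist x a ≤ G.dist x b) : Btw G x a b ∧ Btw G a b y := by
  obtain ⟨P, hP, hPl⟩ := hT.isConnected.exists_path_of_dist x y
  have hma := mem_support_of_btw hT P hP ha
  have hmb := mem_support_of_btw hT P hP hb
  obtain ⟨i, hi, hile⟩ := SimpleGraph.Walk.mem_support_iff_exists_getVert.mp hma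
  obtain ⟨j, hj, hjle⟩ := SimpleGraph.Walk.mem_support_iff_exists_getVert.mp hmb
  have ei := dist_getVert_left hT.isConnected P hPl hile
  have ej := dist_getVert_left hT.isConnected P hPl hjle
  rw [hi] at ei; rw [hj] at ej
  have hij : i ≤ j := by omega
  have eab := dist_getVert_getVert hT.isConnected P hPl hij hjle
  rw [hi, hj] at eab
  unfold Btw at ha hb ⊢
  constructor <;> omega

/-- Median existence in a tree. -/
lemma exists_median (x y s : V) :
    ∃ m, Btw G x m y ∧ Btw G x m s ∧ Btw G y m s := by
  classical
  obtain ⟨P, hP, hPl⟩ := hT.isConnected.exists_path_of_dist x y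
  obtain ⟨Q, hQ, hQl⟩ := hT.isConnected.exists_path_of_dist x s
  set C : Set V := {z | z ∈ P.support ∧ z ∈ Q.support} with hC
  have hCfin : C.Finite := Set.Finite.subset (List.finite_toSet P.support) (fun z hz => hz.1)
  have hxC : x ∈ C := ⟨P.start_mem_support, Q.start_mem_support⟩
  obtain ⟨m, hmC, hmax'⟩ := Set.exists_max_image C (fun z => G.dist x z) hCfin ⟨x, hxC⟩
  obtain ⟨hmP, hmQ⟩ := hmC
  have btw1 : Btw G x m y := btw_of_mem_support hT P hPl hmP
  have btw2 : Btw G x m s := btw_of_mem_support hT Q hQl hmQ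
  refine ⟨m, btw1, btw2, ?_⟩
  -- lengths of the dropped parts
  have hdP : (P.dropUntil m hmP).length = G.dist m y := by
    have hspec := P.take_spec hmP
    have hlen : (P.takeUntil m hmP).length + (P.dropUntil m hmP).length = P.length := by
      rw [← SimpleGraph.Walk.length_append, hspec]
    have h1 := SimpleGraph.dist_le (P.takeUntil m hmP)
    have h2 := SimpleGraph.dist_le (P.dropUntil m hmP)
    unfold Btw at btw1
    omega
  have hdQ : (Q.dropUntil m hmQ).length = G.dist m s := by
    have hspec := Q.take_spec hmQ
    have hlen : (Q.takeUntil m hmQ).length + (Q.dropUntil m hmQ).length = Q.length := by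
      rw [← SimpleGraph.Walk.length_append, hspec]
    have h1 := SimpleGraph.dist_le (Q.takeUntil m hmQ)
    have h2 := SimpleGraph.dist_le (Q.dropUntil m hmQ)
    unfold Btw at btw2
    omega
  set W := (P.dropUntil m hmP).reverse.append (Q.dropUntil m hmQ) with hW
  have hWpath : W.IsPath := by
    apply append_isPath (hP.dropUntil hmP).reverse (hQ.dropUntil hmQ)
    intro z hz1 hz2
    rw [SimpleGraph.Walk.support_reverse, List.mem_reverse] at hz1
    have hzC : z ∈ C :=
      ⟨SimpleGraph.Walk.support_dropUntil_subset P hmP hz1,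
       SimpleGraph.Walk.support_dropUntil_subset Q hmQ hz2⟩
    have hzle := hmax' z hzC
    have hbmzy : Btw G m z y := btw_of_mem_support hT (P.dropUntil m hmP) hdP hz1
    have htri := dist_triangle' hT x z y
    unfold Btw at btw1 hbmzy
    have : G.dist m z = 0 := by omega
    exact (dist_eq_zero' hT this).symm
  have hWlen : W.length = G.dist m y + G.dist m s := by
    rw [hW, SimpleGraph.Walk.length_append, SimpleGraph.Walk.length_reverse, hdP, hdQ]
  have := path_length_eq_dist hT W hWpath
  unfold Btw
  have c1 := dist_comm' hT y m
  omega

/-- Concatenation of geodesics through two collinear points. -/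
lemma btw_concat {w m x u : V} (h1 : Btw G w m x) (h2 : Btw G m x u) (hmx : m ≠ x) :
    Btw G w x u := by
  obtain ⟨y', med1, med2, med3⟩ := exists_median hT m u w
  by_cases hcase : G.dist m y' ≤ G.dist m x
  · obtain ⟨o1, o2⟩ := btw_order hT med1 h2 hcase
    have t1 := dist_triangle' hT w y' x
    have t2 := dist_triangle' hT w x u
    have c1 := dist_comm' hT u y'
    have c2 := dist_comm' hT u w
    have c3 := dist_comm' hT y' w
    have c4 := dist_comm' hT y' x
    unfold Btw at med1 med2 med3 o1 o2 h1 h2 ⊢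
    omega
  · push_neg at hcase
    obtain ⟨o1, o2⟩ := btw_order hT h2 med1 (le_of_lt hcase)
    exfalso
    have t1 := dist_triangle' hT w y' x
    have c1 := dist_comm' hT m w
    have c2 := dist_comm' hT y' w
    have c3 := dist_comm' hT y' x
    have hz : G.dist m x = 0 := by
      unfold Btw at med2 o1 h1
      omega
    exact hmx (dist_eq_zero' hT hz)

/-- Any vertex sees a point between itself and one of the two sides of a geodesic. -/
lemma btw_branch {u₁ u₂ z : V} (h : Btw G u₁ z u₂) (x : V) :
    Btw G x z u₁ ∨ Btw G x z u₂ := by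
  obtain ⟨m, med1, med2, med3⟩ := exists_median hT u₁ u₂ x
  by_cases hcase : G.dist u₁ m ≤ G.dist u₁ z
  · right
    obtain ⟨o1, o2⟩ := btw_order hT med1 h hcase
    have t1 := dist_triangle' hT x m z
    have t2 := dist_triangle' hT x z u₂
    have c1 := dist_comm' hT u₂ m
    have c2 := dist_comm' hT u₂ x
    have c3 := dist_comm' hT m x
    unfold Btw at med1 med2 med3 o1 o2 h ⊢
    omega
  · left
    push_neg at hcase
    obtain ⟨o1, o2⟩ := btw_order hT h med1 (le_of_lt hcase)
    have t1 := dist_triangle' hT x m z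
    have t2 := dist_triangle' hT x z u₁
    have c1 := dist_comm' hT u₁ m
    have c2 := dist_comm' hT u₁ x
    have c3 := dist_comm' hT m x
    have c4 := dist_comm' hT m z
    have c5 := dist_comm' hT z u₁
    unfold Btw at med1 med2 med3 o1 o2 h ⊢
    omega

end Tree2

section Stem
variable [Fintype V] [DecidableEq V] [DecidableRel G.Adj] (hT : G.IsTree)

lemma stemIter_succ_subset (i : ℕ) :
    stemIter G Finset.univ (i + 1) ⊆ stemIter G Finset.univ i :=
  Finset.filter_subset _ _

lemma stemIter_subset {i j : ℕ} (h : i ≤ j) :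
    stemIter G Finset.univ j ⊆ stemIter G Finset.univ i := by
  induction j with
  | zero => simp_all
  | succ j ih =>
    rcases Nat.lt_or_ge i (j+1) with hlt | hge
    · exact (stemIter_succ_subset j).trans (ih (by omega))
    · have : i = j + 1 := by omega
      subst this; exact subset_rfl

include hT

lemma stem_convex : ∀ i : ℕ, ∀ p q z : V, p ∈ stemIter G Finset.univ i →
    q ∈ stemIter G Finset.univ i → Btw G p z q → z ∈ stemIter G Finset.univ i := by
  intro i
  induction i with
  | zero => intro p q z _ _ _; simp [stemIter]
  | succ i ih =>
    intro p q z hp hq hbtw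
    by_cases hzp : z = p
    · subst hzp; exact hp
    by_cases hzq : z = q
    · subst hzq; exact hq
    have hp' : p ∈ stemIter G Finset.univ i := stemIter_succ_subset i hp
    have hq' : q ∈ stemIter G Finset.univ i := stemIter_succ_subset i hq
    have hz' : z ∈ stemIter G Finset.univ i := ih p q z hp' hq' hbtw
    obtain ⟨P, hP, hPl⟩ := hT.isConnected.exists_path_of_dist p q
    have hzsup := mem_support_of_btw hT P hP hbtw
    obtain ⟨k, hk, hkle⟩ := SimpleGraph.Walk.mem_support_iff_exists_getVert.mp hzsup
    have hk0 : k ≠ 0 := by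
      intro h; subst h; rw [SimpleGraph.Walk.getVert_zero] at hk; exact hzp hk.symm
    have hkl : k ≠ P.length := by
      intro h; subst h; rw [SimpleGraph.Walk.getVert_length] at hk; exact hzq hk.symm
    have hadj1 : G.Adj (P.getVert (k-1)) (P.getVert k) := by
      have := P.adj_getVert_succ (i := k - 1) (by omega)
      have hke : k - 1 + 1 = k := by omega
      rwa [hke] at this
    have hadj2 : G.Adj (P.getVert k) (P.getVert (k+1)) :=
      P.adj_getVert_succ (by omega)
    have hne12 : P.getVert (k-1) ≠ P.getVert (k+1) := by
      intro h
      have := dist_getVert_getVert hT.isConnected P hPl (i := k-1) (j := k+1)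
        (by omega) (by omega)
      rw [h] at this
      rw [dist_self'] at this
      omega
    have hmem1 : P.getVert (k-1) ∈ stemIter G Finset.univ i :=
      ih p q _ hp' hq' (btw_getVert hT.isConnected P hPl (by omega))
    have hmem2 : P.getVert (k+1) ∈ stemIter G Finset.univ i :=
      ih p q _ hp' hq' (btw_getVert hT.isConnected P hPl (by omega))
    have hdeg : 1 < degIn G (stemIter G Finset.univ i) z := by
      rw [degIn]
      apply Finset.one_lt_card.mpr
      refine ⟨P.getVert (k-1), ?_, P.getVert (k+1), ?_, hne12⟩
      · rw [Finset.mem_filter]; exact ⟨hmem1, by rw [← hk]; exact hadj1.symm⟩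
      · rw [Finset.mem_filter]; exact ⟨hmem2, by rw [← hk]; exact hadj2⟩
    show z ∈ Finset.filter _ _
    rw [Finset.mem_filter]
    exact ⟨hz', hdeg⟩

lemma stem_branches : ∀ i : ℕ, ∀ x : V, x ∈ stemIter G Finset.univ i →
    ∃ u₁ u₂, Btw G u₁ x u₂ ∧ i ≤ G.dist x u₁ ∧ i ≤ G.dist x u₂ := by
  intro i
  induction i with
  | zero => intro x _; exact ⟨x, x, btw_left x x, by omega, by omega⟩
  | succ i ih =>
    intro x hx
    rw [show stemIter G Finset.univ (i+1) = Finset.filter _ _ from rfl,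
      Finset.mem_filter] at hx
    obtain ⟨hx', hdeg⟩ := hx
    rw [degIn] at hdeg
    obtain ⟨z₁, hz₁, z₂, hz₂, hz12⟩ := Finset.one_lt_card.mp hdeg
    rw [Finset.mem_filter] at hz₁ hz₂
    obtain ⟨hz₁A, hz₁adj⟩ := hz₁
    obtain ⟨hz₂A, hz₂adj⟩ := hz₂
    -- from each neighbour, a deep vertex behind it
    have key : ∀ z : V, z ∈ stemIter G Finset.univ i → G.Adj x z →
        ∃ u, Btw G x z u ∧ i + 1 ≤ G.dist x u := by
      intro z hz hadj
      obtain ⟨a, b, hab, hda, hdb⟩ := ih z hz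
      have hxz1 : G.dist x z = 1 := SimpleGraph.dist_eq_one_iff_adj.mpr hadj
      rcases btw_branch hT hab x with hbr | hbr
      · refine ⟨a, hbr, ?_⟩
        have c := dist_comm' hT z a
        unfold Btw at hbr
        omega
      · refine ⟨b, hbr, ?_⟩
        have c := dist_comm' hT z b
        unfold Btw at hbr
        omega
    obtain ⟨u₁, hbu₁, hdu₁⟩ := key z₁ hz₁A hz₁adj
    obtain ⟨u₂, hbu₂, hdu₂⟩ := key z₂ hz₂A hz₂adj
    have hxz₁ : G.dist x z₁ = 1 := SimpleGraph.dist_eq_one_iff_adj.mpr hz₁adj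
    have hxz₂ : G.dist x z₂ = 1 := SimpleGraph.dist_eq_one_iff_adj.mpr hz₂adj
    refine ⟨u₁, u₂, ?_, ?_, ?_⟩
    · -- x is the median of u₁, u₂
      obtain ⟨m, med1, med2, med3⟩ := exists_median hT u₁ u₂ x
      have hmx : m = x := by
        by_contra hmx
        have hdxm : 1 ≤ G.dist x m := by
          rcases Nat.eq_zero_or_pos (G.dist x m) with h0 | h1
          · exact absurd (dist_eq_zero' hT h0).symm hmx
          · omega
        -- z₁ and z₂ are both points at distance 1 from x towards m
        have hbm₁ : Btw G x m u₁ := by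
          have c1 := dist_comm' hT u₁ m
          have c2 := dist_comm' hT u₁ x
          have c3 := dist_comm' hT m x
          unfold Btw at med2 ⊢
          omega
        have hbm₂ : Btw G x m u₂ := by
          have c1 := dist_comm' hT u₂ m
          have c2 := dist_comm' hT u₂ x
          have c3 := dist_comm' hT m x
          unfold Btw at med3 ⊢
          omega
        have ho₁ := (btw_order hT hbu₁ hbm₁ (by omega)).1
        have ho₂ := (btw_order hT hbu₂ hbm₂ (by omega)).1
        exact hz12 (btw_dist_unique hT ho₁ ho₂ (by omega))
      rw [hmx] at med1
      exact med1
    · omega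
    · omega

lemma mem_stem_of_branches : ∀ i : ℕ, ∀ x u₁ u₂ : V, Btw G u₁ x u₂ →
    i ≤ G.dist x u₁ → i ≤ G.dist x u₂ → x ∈ stemIter G Finset.univ i := by
  intro i
  induction i with
  | zero => intro x _ _ _ _ _; simp [stemIter]
  | succ i ih =>
    intro x u₁ u₂ hbtw hd₁ hd₂
    have hx' : x ∈ stemIter G Finset.univ i := ih x u₁ u₂ hbtw (by omega) (by omega)
    -- the two neighbours on the geodesics towards u₁ and u₂
    have hc₁ := dist_comm' hT x u₁
    have hc₂ := dist_comm' hT x u₂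
    obtain ⟨z₁, hbz₁, hdz₁⟩ := exists_btw_dist hT (x := x) (y := u₁) (j := 1) (by omega)
    obtain ⟨z₂, hbz₂, hdz₂⟩ := exists_btw_dist hT (x := x) (y := u₂) (j := 1) (by omega)
    have hz₁A : z₁ ∈ stemIter G Finset.univ i := by
      apply ih z₁ u₁ u₂
      · have t := dist_triangle' hT u₁ z₁ u₂
        have t2 := dist_triangle' hT z₁ x u₂
        have c := dist_comm' hT z₁ x
        have c2 := dist_comm' hT z₁ u₁
        have c3 := dist_comm' hT z₁ u₂
        unfold Btw at hbz₁ hbtw ⊢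
        omega
      · have c2 := dist_comm' hT z₁ u₁
        unfold Btw at hbz₁
        omega
      · have t2 := dist_triangle' hT u₂ x z₁
        have t3 := dist_triangle' hT u₁ z₁ u₂
        have c := dist_comm' hT z₁ x
        have c2 := dist_comm' hT z₁ u₁
        have c3 := dist_comm' hT u₂ z₁
        unfold Btw at hbz₁ hbtw
        omega
    have hz₂A : z₂ ∈ stemIter G Finset.univ i := by
      apply ih z₂ u₂ u₁
      · have t := dist_triangle' hT u₂ z₂ u₁
        have t2 := dist_triangle' hT z₂ x u₁
        have c := dist_comm' hT z₂ x
        have c2 := dist_comm' hT z₂ u₂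
        have c3 := dist_comm' hT z₂ u₁
        have c4 := dist_comm' hT u₁ u₂
        unfold Btw at hbz₂ hbtw ⊢
        omega
      · have c2 := dist_comm' hT z₂ u₂
        unfold Btw at hbz₂
        omega
      · have t2 := dist_triangle' hT u₁ x z₂
        have t3 := dist_triangle' hT u₂ z₂ u₁
        have c := dist_comm' hT z₂ x
        have c2 := dist_comm' hT z₂ u₂
        have c3 := dist_comm' hT u₁ z₂
        have c4 := dist_comm' hT u₁ u₂
        unfold Btw at hbz₂ hbtw
        omega
    have hzne : z₁ ≠ z₂ := by
      intro h
      subst h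
      have t := dist_triangle' hT u₁ z₁ u₂
      have c2 := dist_comm' hT z₁ u₁
      unfold Btw at hbz₁ hbz₂ hbtw
      omega
    have hadj₁ : G.Adj x z₁ := SimpleGraph.dist_eq_one_iff_adj.mp hdz₁
    have hadj₂ : G.Adj x z₂ := SimpleGraph.dist_eq_one_iff_adj.mp hdz₂
    show x ∈ Finset.filter _ _
    rw [Finset.mem_filter]
    refine ⟨hx', ?_⟩
    rw [degIn]
    apply Finset.one_lt_card.mpr
    exact ⟨z₁, Finset.mem_filter.mpr ⟨hz₁A, hadj₁⟩, z₂,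
      Finset.mem_filter.mpr ⟨hz₂A, hadj₂⟩, hzne⟩

/-- Two adjacent stem vertices exist when the diameter is big enough. -/
lemma stem_two {r : ℕ} (hdiam : 2 * r < G.diam) :
    ∃ z₁ z₂, z₁ ∈ stemIter G Finset.univ r ∧ z₂ ∈ stemIter G Finset.univ r ∧
      G.dist z₁ z₂ = 1 := by
  have hnt : Nontrivial V := nontrivial_of_diam_ne_zero (G := G) (by omega)
  have : Nonempty V := ⟨hnt.exists_pair_ne.choose⟩
  obtain ⟨e₁, e₂, he⟩ := exists_dist_eq_diam (G := G)
  have hD : 2 * r < G.dist e₁ e₂ := by omega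
  obtain ⟨z₁, hbz₁, hdz₁⟩ := exists_btw_dist hT (x := e₁) (y := e₂) (j := r) (by omega)
  obtain ⟨z₂, hbz₂, hdz₂⟩ := exists_btw_dist hT (x := e₁) (y := e₂) (j := r + 1) (by omega)
  have c₁ := dist_comm' hT z₁ e₁
  have c₂ := dist_comm' hT z₂ e₁
  refine ⟨z₁, z₂, ?_, ?_, ?_⟩
  · apply mem_stem_of_branches hT r z₁ e₁ e₂
    · unfold Btw at hbz₁ ⊢; omega
    · omega
    · unfold Btw at hbz₁; omega
  · apply mem_stem_of_branches hT r z₂ e₁ e₂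
    · unfold Btw at hbz₂ ⊢; omega
    · omega
    · unfold Btw at hbz₂; omega
  · have := (btw_order hT hbz₁ hbz₂ (by omega)).1
    unfold Btw at this
    omega

/-- Every vertex is within distance `r` of the `r`-th stem, provided it is nonempty. -/
lemma exists_near_stem : ∀ i : ℕ, (stemIter G Finset.univ i).Nonempty →
    ∀ v : V, ∃ p ∈ stemIter G Finset.univ i, G.dist v p ≤ i := by
  intro i
  induction i with
  | zero => intro _ v; exact ⟨v, by simp [stemIter], by rw [dist_self']⟩
  | succ i ih =>
    intro hne v
    obtain ⟨w, hw⟩ := hne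
    have hne' : (stemIter G Finset.univ i).Nonempty :=
      ⟨w, stemIter_succ_subset i hw⟩
    obtain ⟨p, hpA, hpd⟩ := ih hne' v
    -- find z ∈ A (i+1) with dist p z ≤ 1
    have step : ∃ z ∈ stemIter G Finset.univ (i+1), G.dist p z ≤ 1 := by
      by_cases hp1 : p ∈ stemIter G Finset.univ (i+1)
      · exact ⟨p, hp1, by rw [dist_self']; omega⟩
      have hpw : p ≠ w := fun h => hp1 (h ▸ hw)
      have hdpw : 1 ≤ G.dist p w := hT.isConnected.pos_dist_of_ne hpw
      obtain ⟨z, hbz, hdz⟩ := exists_btw_dist hT (x := p) (y := w) (j := 1) hdpw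
      by_cases hzw : z = w
      · exact ⟨w, hw, by rw [← hzw]; omega⟩
      refine ⟨z, ?_, by omega⟩
      -- deep branch behind p
      obtain ⟨a, b, hab, hda, hdb⟩ := stem_branches hT i p hpA
      have hu : ∃ u, Btw G z p u ∧ i ≤ G.dist p u := by
        rcases btw_branch hT hab z with hbr | hbr
        · exact ⟨a, hbr, hda⟩
        · exact ⟨b, hbr, hdb⟩
      obtain ⟨u, hbu, hdu⟩ := hu
      -- deep branch behind w
      obtain ⟨a', b', hab', hda', hdb'⟩ := stem_branches hT (i+1) w hw
      have hu' : ∃ u', Btw G z w u' ∧ i + 1 ≤ G.dist w u' := by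
        rcases btw_branch hT hab' z with hbr | hbr
        · exact ⟨a', hbr, hda'⟩
        · exact ⟨b', hbr, hdb'⟩
      obtain ⟨u', hbu', hdu'⟩ := hu'
      have hpz : p ≠ z := by
        intro h; rw [← h] at hdz; rw [dist_self'] at hdz; omega
      -- u — z — w — u' collinear
      have huzw : Btw G u z w := by
        apply btw_concat hT (w := u) (m := p) (x := z) (u := w) ?_ hbz hpz
        have c1 := dist_comm' hT z p
        have c2 := dist_comm' hT z u
        have c3 := dist_comm' hT p u
        unfold Btw at hbu ⊢
        omega
      have huwu' : Btw G u w u' := btw_concat hT huzw hbu' hzw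
      have huzu' : Btw G u z u' := by
        unfold Btw at huzw huwu' hbu' ⊢
        omega
      apply mem_stem_of_branches hT (i+1) z u u'
      · exact huzu'
      · have c1 := dist_comm' hT z p
        have c2 := dist_comm' hT z u
        have c3 := dist_comm' hT p u
        unfold Btw at hbu
        omega
      · unfold Btw at hbu'
        omega
    obtain ⟨z, hz, hdz⟩ := step
    refine ⟨z, hz, ?_⟩
    have t := dist_triangle' hT v p z
    omega

/-- The gate (nearest-point projection) onto the `r`-th stem. -/
lemma exists_gate {r : ℕ} (hne : (stemIter G Finset.univ r).Nonempty) (v : V) :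
    ∃ p ∈ stemIter G Finset.univ r, G.dist v p ≤ r ∧
      ∀ s ∈ stemIter G Finset.univ r, Btw G v p s := by
  obtain ⟨p, hpA, hpmin⟩ :=
    Finset.exists_min_image (stemIter G Finset.univ r) (fun z => G.dist v z) hne
  obtain ⟨p', hp'A, hp'd⟩ := exists_near_stem hT r hne v
  refine ⟨p, hpA, le_trans (hpmin p' hp'A) hp'd, ?_⟩
  intro s hs
  obtain ⟨m, med1, med2, med3⟩ := exists_median hT v p s
  have hmA : m ∈ stemIter G Finset.univ r := stem_convex hT r p s m hpA hs med3
  have hmin := hpmin m hmA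
  have hmp : m = p := by
    apply dist_eq_zero' hT
    unfold Btw at med1
    omega
  rw [← hmp]
  exact med2

omit hT in
/-- Lift a walk with support inside `A` to the induced graph. -/
lemma exists_lift_walk {A : Finset V} :
    ∀ {u v : V} (w : G.Walk u v) (hu : u ∈ (A : Set V)) (hv : v ∈ (A : Set V)),
    (∀ z ∈ w.support, z ∈ (A : Set V)) →
      ∃ q : (G.induce (A : Set V)).Walk ⟨u, hu⟩ ⟨v, hv⟩, q.length = w.length := by
  intro u v w
  induction w with
  | nil => intro hu hv _; exact ⟨.nil, rfl⟩
  | @cons a b c h p ih =>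
    intro hu hv hsupp
    have hb : b ∈ (A : Set V) := hsupp b (by simp)
    obtain ⟨q, hq⟩ := ih hb hv (fun z hz => hsupp z (by simp [hz]))
    have hadj : (G.induce (A : Set V)).Adj ⟨a, hu⟩ ⟨b, hb⟩ := by
      simp only [comap_adj, Function.Embedding.coe_subtype]
      exact h
    exact ⟨q.cons hadj, by simp [hq]⟩

/-- Distances in the induced stem agree with distances in the tree. -/
lemma induced_dist_eq {r : ℕ} {p q : V} (hp : p ∈ stemIter G Finset.univ r)
    (hq : q ∈ stemIter G Finset.univ r) :
    (G.induce ((stemIter G Finset.univ r : Finset V) : Set V)).dist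
      ⟨p, by simpa using hp⟩ ⟨q, by simpa using hq⟩ = G.dist p q := by
  obtain ⟨P, hP, hPl⟩ := hT.isConnected.exists_path_of_dist p q
  have hsupp : ∀ z ∈ P.support, z ∈ ((stemIter G Finset.univ r : Finset V) : Set V) := by
    intro z hz
    have := stem_convex hT r p q z hp hq (btw_of_mem_support hT P hPl hz)
    simpa using this
  obtain ⟨Q, hQ⟩ := exists_lift_walk (G := G) (A := stemIter G Finset.univ r) P
    (by simpa using hp) (by simpa using hq) hsupp
  apply le_antisymm
  · calc (G.induce ((stemIter G Finset.univ r : Finset V) : Set V)).dist _ _ ≤ Q.length :=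
          SimpleGraph.dist_le Q
    _ = G.dist p q := by rw [hQ, hPl]
  · have hreach : (G.induce ((stemIter G Finset.univ r : Finset V) : Set V)).Reachable
        ⟨p, by simpa using hp⟩ ⟨q, by simpa using hq⟩ := ⟨Q⟩
    obtain ⟨W, hW⟩ := hreach.exists_walk_length_eq_dist
    have hmap : G.dist p q ≤ W.length := by
      have := SimpleGraph.dist_le
        (W.map (⟨Subtype.val, fun {a b} h => by simpa using h⟩ :
          (G.induce ((stemIter G Finset.univ r : Finset V) : Set V)) →g G))
      rw [SimpleGraph.Walk.length_map] at this
      exact this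
    omega

/-- `induced_dist_eq` with arbitrary membership proofs. -/
lemma induced_dist_eq' {r : ℕ} {p q : V} (hp : p ∈ stemIter G Finset.univ r)
    (hq : q ∈ stemIter G Finset.univ r)
    (hp' : p ∈ ((stemIter G Finset.univ r : Finset V) : Set V))
    (hq' : q ∈ ((stemIter G Finset.univ r : Finset V) : Set V)) :
    (G.induce ((stemIter G Finset.univ r : Finset V) : Set V)).dist
      ⟨p, hp'⟩ ⟨q, hq'⟩ = G.dist p q :=
  induced_dist_eq hT hp hq

/-- If a resolving set of the stem sees two stem vertices with identification vectors
differing by constants, then one of them lies behind the other. -/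
lemma no_middle {r : ℕ} {S' : Finset ((stemIter G Finset.univ r : Finset V) : Set V)}
    (hres : IsRelaxedResolving (G.induce ((stemIter G Finset.univ r : Finset V) : Set V)) 0 ↑S')
    {p q : V} (hp : p ∈ stemIter G Finset.univ r) (hq : q ∈ stemIter G Finset.univ r)
    {a b t : ℕ}
    (hkey : ∀ s' ∈ S', a + G.dist p (s' : V) = b + G.dist q (s' : V))
    (ht : 2 * t + a = b + G.dist p q) (h2t : 2 * t ≤ G.dist p q) (htpos : 0 < t) :
    False := by
  obtain ⟨y, hby, hdy⟩ := exists_btw_dist hT (x := p) (y := q) (j := 2 * t) h2t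
  have hyA : y ∈ stemIter G Finset.univ r := stem_convex hT r p q y hp hq hby
  have hyp : y ≠ p := by
    intro h
    rw [h, dist_self'] at hdy
    omega
  have hsame : ∀ s' ∈ S', G.dist y (s' : V) = G.dist p (s' : V) := by
    intro s' hs'
    obtain ⟨m, med1, med2, med3⟩ := exists_median hT p q (s' : V)
    have hkey' := hkey s' hs'
    have hpm : G.dist p m = t := by
      have c4 := dist_comm' hT q m
      unfold Btw at med1 med2 med3
      omega
    have hord := btw_order hT med1 hby (by omega)
    have t1 := dist_triangle' hT y m (s' : V)
    have t2 := dist_triangle' hT q y (s' : V)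
    have c1 := dist_comm' hT m y
    have c2 := dist_comm' hT q y
    have c3 := dist_comm' hT q p
    have c4 := dist_comm' hT q m
    unfold Btw at med1 med2 med3 hby
    obtain ⟨ho1, ho2⟩ := hord
    unfold Btw at ho1 ho2
    omega
  have hyA' : y ∈ ((stemIter G Finset.univ r : Finset V) : Set V) := by simpa using hyA
  have hpA' : p ∈ ((stemIter G Finset.univ r : Finset V) : Set V) := by simpa using hp
  have hzero := hres ⟨y, hyA'⟩ ⟨p, hpA'⟩ ?_
  · rw [induced_dist_eq' hT hyA hp] at hzero
    have : G.dist y p = 0 := by omega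
    exact hyp (dist_eq_zero' hT this)
  · intro s hs
    obtain ⟨sv, hsv⟩ := s
    have hsvA : sv ∈ stemIter G Finset.univ r := by simpa using hsv
    rw [induced_dist_eq' hT hyA hsvA, induced_dist_eq' hT hp hsvA]
    exact hsame ⟨sv, hsv⟩ (Finset.mem_coe.mp hs)

/-- The `2r`-relaxed metric dimension of the tree is at most the metric dimension of the stem. -/
lemma mdk_le {r : ℕ} (hdiam : 2 * r < G.diam) :
    MDk G (2 * r) ≤ MDk (G.induce ((stemIter G Finset.univ r : Finset V) : Set V)) 0 := by
  classical
  obtain ⟨z₁, z₂, hz₁, hz₂, hz12⟩ := stem_two hT hdiam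
  have hne : (stemIter G Finset.univ r).Nonempty := ⟨z₁, hz₁⟩
  set H := G.induce ((stemIter G Finset.univ r : Finset V) : Set V) with hH
  have hresu : IsRelaxedResolving H 0 ↑(Finset.univ :
      Finset ((stemIter G Finset.univ r : Finset V) : Set V)) := by
    intro u v h
    have := h v (by simp)
    rw [SimpleGraph.dist_self] at this
    omega
  have hnon : {n | ∃ S : Finset ((stemIter G Finset.univ r : Finset V) : Set V),
      IsRelaxedResolving H 0 ↑S ∧ S.card = n}.Nonempty :=
    ⟨Finset.univ.card, Finset.univ, hresu, rfl⟩
  have hmem : MDk H 0 ∈ {n | ∃ S : Finset ((stemIter G Finset.univ r : Finset V) : Set V),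
      IsRelaxedResolving H 0 ↑S ∧ S.card = n} := Nat.sInf_mem hnon
  obtain ⟨S', hres, hcard⟩ := hmem
  -- S' is nonempty
  have hSne : S'.Nonempty := by
    rcases Finset.eq_empty_or_nonempty S' with hS | hS
    · exfalso
      subst hS
      have := hres ⟨z₁, by simpa using hz₁⟩ ⟨z₂, by simpa using hz₂⟩ (by simp)
      rw [hH, induced_dist_eq' hT hz₁ hz₂] at this
      omega
    · exact hS
  apply Nat.sInf_le
  refine ⟨S'.image Subtype.val, ?_, by
    rw [Finset.card_image_of_injective _ Subtype.val_injective, hcard]⟩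
  intro u v h
  have h' : ∀ s' ∈ S', G.dist u (s' : V) = G.dist v (s' : V) := by
    intro s' hs'
    exact h (s' : V) (by
      simp only [Finset.coe_image, Set.mem_image, Finset.mem_coe]
      exact ⟨s', hs', rfl⟩)
  obtain ⟨p, hpA, hpd, hpgate⟩ := exists_gate hT hne u
  obtain ⟨q, hqA, hqd, hqgate⟩ := exists_gate hT hne v
  set a := G.dist u p with ha
  set b := G.dist v q with hb
  have hkey : ∀ s' ∈ S', a + G.dist p (s' : V) = b + G.dist q (s' : V) := by
    intro s' hs'
    have hsA : (s' : V) ∈ stemIter G Finset.univ r := by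
      have := s'.2; simpa using this
    have g1 := hpgate (s' : V) hsA
    have g2 := hqgate (s' : V) hsA
    have := h' s' hs'
    unfold Btw at g1 g2
    omega
  obtain ⟨s₀, hs₀⟩ := hSne
  by_cases hpq : p = q
  · subst hpq
    have := hkey s₀ hs₀
    have hab : a = b := by omega
    have t1 := dist_triangle' hT u p v
    have c1 := dist_comm' hT p v
    omega
  · -- median structure
    have hDpos : 1 ≤ G.dist p q := hT.isConnected.pos_dist_of_ne hpq
    obtain ⟨m₀, med1, med2, med3⟩ := exists_median hT p q (s₀ : V)
    set t := G.dist p m₀ with htdef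
    have ht : 2 * t + a = b + G.dist p q := by
      have := hkey s₀ hs₀
      have c4 := dist_comm' hT q m₀
      unfold Btw at med1 med2 med3
      omega
    have htD : t ≤ G.dist p q := by
      unfold Btw at med1; omega
    -- symmetric data
    have hkey' : ∀ s' ∈ S', b + G.dist q (s' : V) = a + G.dist p (s' : V) :=
      fun s' hs' => (hkey s' hs').symm
    have ht' : 2 * (G.dist p q - t) + b = a + G.dist q p := by
      have c := dist_comm' hT q p
      omega
    rcases le_or_gt (2 * t) (G.dist p q) with hc | hc
    · have ht0 : t = 0 := by
        by_contra h0
        exact no_middle hT hres hpA hqA hkey ht hc (by omega)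
      -- a = b + D
      have t1 := dist_triangle' hT u p v
      have t2 := dist_triangle' hT p q v
      have c1 := dist_comm' hT q v
      have c2 := dist_comm' hT p v
      have c3 := dist_comm' hT q p
      omega
    · have h2t' : 2 * (G.dist p q - t) ≤ G.dist q p := by
        have c := dist_comm' hT q p
        omega
      have ht0 : G.dist p q - t = 0 := by
        by_contra h0
        exact no_middle hT hres hqA hpA hkey' ht' h2t' (by omega)
      -- t = D hence b = a + D
      have t1 := dist_triangle' hT v q u
      have t2 := dist_triangle' hT q p u
      have c1 := dist_comm' hT p u
      have c2 := dist_comm' hT u v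
      have c3 := dist_comm' hT q p
      omega

/-- The metric dimension of the stem is at most the `2r`-relaxed metric dimension. -/
lemma mdk_ge {r : ℕ} (hdiam : 2 * r < G.diam) :
    MDk (G.induce ((stemIter G Finset.univ r : Finset V) : Set V)) 0 ≤ MDk G (2 * r) := by
  classical
  obtain ⟨z₁, z₂, hz₁, hz₂, hz12⟩ := stem_two hT hdiam
  have hne : (stemIter G Finset.univ r).Nonempty := ⟨z₁, hz₁⟩
  set H := G.induce ((stemIter G Finset.univ r : Finset V) : Set V) with hH
  -- a minimum relaxed resolving set of G
  have hresu : IsRelaxedResolving G (2 * r) ↑(Finset.univ : Finset V) := by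
    intro u v h
    have := h v (by simp)
    rw [SimpleGraph.dist_self] at this
    omega
  have hnon : {n | ∃ S : Finset V, IsRelaxedResolving G (2 * r) ↑S ∧ S.card = n}.Nonempty :=
    ⟨Finset.univ.card, Finset.univ, hresu, rfl⟩
  have hmem : MDk G (2 * r) ∈ {n | ∃ S : Finset V,
      IsRelaxedResolving G (2 * r) ↑S ∧ S.card = n} := Nat.sInf_mem hnon
  obtain ⟨W, hres, hcard⟩ := hmem
  -- gate projections
  choose π hπA hπd hπgate using fun v => exists_gate hT hne v
  have hπA' : ∀ v : V, π v ∈ ((stemIter G Finset.univ r : Finset V) : Set V) :=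
    fun v => by simpa using hπA v
  set W' : Finset ((stemIter G Finset.univ r : Finset V) : Set V) :=
    W.image (fun w => ⟨π w, hπA' w⟩) with hW'
  have hcard' : W'.card ≤ W.card := Finset.card_image_le
  have hres' : IsRelaxedResolving H 0 ↑W' := by
    intro x' y' h
    obtain ⟨x, hx'⟩ := x'
    obtain ⟨y, hy'⟩ := y'
    have hx : x ∈ stemIter G Finset.univ r := by simpa using hx'
    have hy : y ∈ stemIter G Finset.univ r := by simpa using hy'
    by_cases hxy : x = y
    · subst hxy
      exact le_of_eq SimpleGraph.dist_self
    exfalso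
    -- equal distances to all projections, hence to all of W
    have hdist : ∀ w ∈ W, G.dist x w = G.dist y w := by
      intro w hw
      have hmemW' : (⟨π w, hπA' w⟩ : ((stemIter G Finset.univ r : Finset V) : Set V)) ∈ W' :=
        Finset.mem_image_of_mem _ hw
      have := h ⟨π w, hπA' w⟩ (Finset.mem_coe.mpr hmemW')
      rw [hH, induced_dist_eq' hT hx (hπA w), induced_dist_eq' hT hy (hπA w)] at this
      have g1 := hπgate w x hx
      have g2 := hπgate w y hy
      have c1 := dist_comm' hT x (π w)
      have c2 := dist_comm' hT y (π w)
      have c3 := dist_comm' hT x w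
      have c4 := dist_comm' hT y w
      unfold Btw at g1 g2
      omega
    -- W is nonempty
    rcases Finset.eq_empty_or_nonempty W with hWe | ⟨w₀, hw₀⟩
    · subst hWe
      have hnt : Nontrivial V := nontrivial_of_diam_ne_zero (G := G) (by omega)
      have : Nonempty V := ⟨hnt.exists_pair_ne.choose⟩
      obtain ⟨e₁, e₂, he⟩ := exists_dist_eq_diam (G := G)
      have := hres e₁ e₂ (by simp)
      omega
    -- the common median
    obtain ⟨m, hm1, hm2, hm3⟩ := exists_median hT x y w₀
    set t := G.dist x m with htdef
    have hteq : G.dist y m = t ∧ G.dist x y = 2 * t := by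
      have := hdist w₀ hw₀
      have c1 := dist_comm' hT m y
      unfold Btw at hm1 hm2 hm3
      omega
    have htpos : 1 ≤ t := by
      rcases Nat.eq_zero_or_pos t with h0 | h1
      · exfalso
        apply hxy
        apply btw_dist_unique hT (y := y) (x := x) (z₁ := x) (z₂ := y)
          (btw_left x y) (btw_right x y)
        rw [dist_self']
        omega
      · exact h1
    have hmedw : ∀ w ∈ W, Btw G x m w ∧ Btw G y m w := by
      intro w hw
      obtain ⟨n, n1, n2, n3⟩ := exists_median hT x y w
      have hn : G.dist x n = t := by
        have := hdist w hw
        have c1 := dist_comm' hT m y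
        have c2 := dist_comm' hT n y
        unfold Btw at n1 n2 n3 hm1
        omega
      have : n = m := btw_dist_unique hT n1 hm1 (by omega)
      subst this
      exact ⟨n2, n3⟩
    have hmx : m ≠ x := by
      intro h
      rw [h, dist_self'] at htdef
      omega
    have hmy : m ≠ y := by
      intro h
      have := hteq.1
      rw [h, dist_self'] at this
      omega
    -- deep branch behind x avoiding m
    have hbranch : ∀ z : V, z ∈ stemIter G Finset.univ r → ∀ m' : V,
        ∃ zz, Btw G m' z zz ∧ G.dist z zz = r := by
      intro z hz m'
      obtain ⟨a, b, hab, hda, hdb⟩ := stem_branches hT r z hz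
      have hu : ∃ u, Btw G m' z u ∧ r ≤ G.dist z u := by
        rcases btw_branch hT hab m' with hbr | hbr
        · exact ⟨a, hbr, hda⟩
        · exact ⟨b, hbr, hdb⟩
      obtain ⟨u, hbu, hdu⟩ := hu
      obtain ⟨zz, hbzz, hdzz⟩ := exists_btw_dist hT (x := z) (y := u) (j := r) hdu
      refine ⟨zz, ?_, hdzz⟩
      -- m' — z — zz collinear
      have t1 := dist_triangle' hT m' z zz
      have t2 := dist_triangle' hT m' zz u
      unfold Btw at hbu hbzz ⊢
      omega
    obtain ⟨xx, hbxx, hdxx⟩ := hbranch x hx m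
    obtain ⟨yy, hbyy, hdyy⟩ := hbranch y hy m
    -- identification vectors of xx and yy agree on W
    have hvec : ∀ w ∈ W, G.dist xx w = G.dist x w + r ∧ G.dist yy w = G.dist y w + r := by
      intro w hw
      obtain ⟨hw1, hw2⟩ := hmedw w hw
      constructor
      · have hcc : Btw G w x xx := by
          apply btw_concat hT (w := w) (m := m) (x := x) (u := xx) ?_ hbxx hmx
          have c1 := dist_comm' hT x m
          have c2 := dist_comm' hT x w
          have c3 := dist_comm' hT m w
          unfold Btw at hw1 ⊢
          omega
        have c1 := dist_comm' hT xx w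
        have c2 := dist_comm' hT x w
        unfold Btw at hcc
        omega
      · have hcc : Btw G w y yy := by
          apply btw_concat hT (w := w) (m := m) (x := y) (u := yy) ?_ hbyy hmy
          have c1 := dist_comm' hT y m
          have c2 := dist_comm' hT y w
          have c3 := dist_comm' hT m w
          unfold Btw at hw2 ⊢
          omega
        have c1 := dist_comm' hT yy w
        have c2 := dist_comm' hT y w
        unfold Btw at hcc
        omega
    -- but xx and yy are far apart
    have hxxyy : G.dist xx yy = 2 * r + 2 * t := by
      have hxmy : Btw G x m y := hm1
      have hb1 : Btw G xx m y := by
        apply btw_concat hT (w := xx) (m := x) (x := m) (u := y) ?_ ?_ hmx.symm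
        · have c1 := dist_comm' hT xx x
          have c2 := dist_comm' hT xx m
          have c3 := dist_comm' hT x m
          unfold Btw at hbxx ⊢
          omega
        · exact hm1
      have hb2 : Btw G xx y yy := by
        apply btw_concat hT (w := xx) (m := m) (x := y) (u := yy) hb1 hbyy hmy
      have c1 := dist_comm' hT y m
      have c2 := dist_comm' hT xx m
      have c3 := dist_comm' hT m x
      unfold Btw at hb1 hb2 hbyy hm1 hbxx
      omega
    have := hres xx yy ?_
    · omega
    · intro s hs
      have hsW : s ∈ W := Finset.mem_coe.mp hs
      obtain ⟨e1, e2⟩ := hvec s hsW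
      have := hdist s hsW
      omega
  calc MDk H 0 ≤ W'.card := Nat.sInf_le ⟨W', hres', rfl⟩
  _ ≤ W.card := hcard'
  _ = MDk G (2 * r) := hcard

end Stem
end StemAux


/-- For a finite tree `T` with `2r < diam(T)`, the `2r`-relaxed metric
dimension of `T` equals the ordinary metric dimension of `Stem_r(T)`. -/
theorem stmt_2 {V : Type*} [Fintype V] [DecidableEq V] (T : SimpleGraph V)
    [DecidableRel T.Adj] (hT : T.IsTree) (r : ℕ) (hdiam : 2 * r < T.diam) :
    MDk T (2 * r) = MDk (T.induce ((stemSet T r : Finset V) : Set V)) 0 := by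
  exact le_antisymm (StemAux.mdk_le hT hdiam) (StemAux.mdk_ge hT hdiam)
end

section
/- Let G be a finite connected graph and r a nonnegative integer such that Stem_r(G) is not a path graph. Then MD_{2r}(G) ≥ σ_r(G) − ex_r(G). -/
open SimpleGraph

-- ===== auxiliary development =====

section Basics
variable {V : Type*} [Fintype V] [DecidableEq V] (G : SimpleGraph V) [DecidableRel G.Adj]

lemma mem_stemSet_succ {m : ℕ} {v : V} :
    v ∈ stemSet G (m+1) ↔ v ∈ stemSet G m ∧ 1 < degIn G (stemSet G m) v := by
  simp [stemSet, stemIter, Finset.mem_filter]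

lemma stemSet_succ_subset (m : ℕ) : stemSet G (m+1) ⊆ stemSet G m :=
  fun v hv => ((mem_stemSet_succ G).1 hv).1

lemma stemSet_subset {m n : ℕ} (h : m ≤ n) : stemSet G n ⊆ stemSet G m := by
  induction n with
  | zero => simpa [Nat.le_zero.mp h] using Finset.Subset.refl _
  | succ n ih =>
    rcases Nat.lt_or_ge m (n+1) with h' | h'
    · exact (stemSet_succ_subset G n).trans (ih (Nat.lt_succ_iff.mp h'))
    · have : m = n + 1 := le_antisymm h h'
      subst this; exact Finset.Subset.refl _

variable {G}

lemma degIn_le_one_of_not_mem_succ {m : ℕ} {v : V} (hv : v ∈ stemSet G m)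
    (hv' : v ∉ stemSet G (m+1)) : degIn G (stemSet G m) v ≤ 1 := by
  by_contra h
  exact hv' ((mem_stemSet_succ G).2 ⟨hv, by omega⟩)

lemma two_le_degIn_of_mem_succ {m : ℕ} {v : V} (hv : v ∈ stemSet G (m+1)) :
    2 ≤ degIn G (stemSet G m) v := ((mem_stemSet_succ G).1 hv).2

/-- unique neighbour when degree ≤ 1 -/
lemma eq_of_degIn_le_one {A : Finset V} {v b c : V} (h : degIn G A v ≤ 1)
    (hb : b ∈ A) (hab : G.Adj v b) (hc : c ∈ A) (hac : G.Adj v c) : c = b := by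
  have hb' : b ∈ A.filter fun w => G.Adj v w := Finset.mem_filter.2 ⟨hb, hab⟩
  have hc' : c ∈ A.filter fun w => G.Adj v w := Finset.mem_filter.2 ⟨hc, hac⟩
  exact Finset.card_le_one.mp h c hc' b hb'

/-- with degree ≤ 2 and two distinct neighbours `x,y`, any neighbour is `x` or `y` -/
lemma mem_pair_of_degIn_le_two {A : Finset V} {v x y c : V} (h : degIn G A v ≤ 2)
    (hx : x ∈ A) (hax : G.Adj v x) (hy : y ∈ A) (hay : G.Adj v y) (hxy : x ≠ y)
    (hc : c ∈ A) (hac : G.Adj v c) : c = x ∨ c = y := by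
  by_contra hcon
  push_neg at hcon
  have hsub : ({c, x, y} : Finset V) ⊆ A.filter fun w => G.Adj v w := by
    intro z hz
    simp only [Finset.mem_insert, Finset.mem_singleton] at hz
    rcases hz with rfl | rfl | rfl
    · exact Finset.mem_filter.2 ⟨hc, hac⟩
    · exact Finset.mem_filter.2 ⟨hx, hax⟩
    · exact Finset.mem_filter.2 ⟨hy, hay⟩
  have hcard : ({c, x, y} : Finset V).card = 3 := by
    rw [Finset.card_insert_of_notMem (by simp [hcon.1, hcon.2]),
      Finset.card_insert_of_notMem (by simp [hxy]), Finset.card_singleton]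
  have h2 := Finset.card_le_card hsub
  rw [hcard] at h2
  simp only [degIn] at h
  omega

lemma two_le_degIn_of_two_adj {A : Finset V} {v x y : V}
    (hx : x ∈ A) (hax : G.Adj v x) (hy : y ∈ A) (hay : G.Adj v y) (hxy : x ≠ y) :
    2 ≤ degIn G A v := by
  have : ({x, y} : Finset V) ⊆ A.filter fun w => G.Adj v w := by
    intro z hz
    simp only [Finset.mem_insert, Finset.mem_singleton] at hz
    rcases hz with rfl | rfl
    · exact Finset.mem_filter.2 ⟨hx, hax⟩
    · exact Finset.mem_filter.2 ⟨hy, hay⟩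
  have := Finset.card_le_card this
  rwa [Finset.card_pair hxy] at this

lemma one_le_degIn_of_adj {A : Finset V} {v x : V} (hx : x ∈ A) (hax : G.Adj v x) :
    1 ≤ degIn G A v :=
  Finset.card_pos.2 ⟨x, Finset.mem_filter.2 ⟨hx, hax⟩⟩

end Basics

section WalkHelpers
variable {V : Type*} [DecidableEq V] {G : SimpleGraph V}

lemma length_dropUntil_lt {x s a : V} (w : G.Walk x s) (h : a ∈ w.support) (hax : a ≠ x) :
    (w.dropUntil a h).length < w.length := by
  have hspec := SimpleGraph.Walk.take_spec w h
  have : (w.takeUntil a h).length + (w.dropUntil a h).length = w.length := by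
    rw [← SimpleGraph.Walk.length_append, hspec]
  have hpos : 0 < (w.takeUntil a h).length := by
    by_contra hle
    push_neg at hle
    interval_cases h' : (w.takeUntil a h).length
    · exact hax (SimpleGraph.Walk.eq_of_length_eq_zero h').symm
  omega

lemma dist_add_dist_le_length {x s a : V} (w : G.Walk x s) (h : a ∈ w.support) :
    G.dist x a + G.dist a s ≤ w.length := by
  have : (w.takeUntil a h).length + (w.dropUntil a h).length = w.length := by
    rw [← SimpleGraph.Walk.length_append, SimpleGraph.Walk.take_spec w h]
  calc G.dist x a + G.dist a s ≤ (w.takeUntil a h).length + (w.dropUntil a h).length :=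
        Nat.add_le_add (SimpleGraph.dist_le _) (SimpleGraph.dist_le _)
    _ = w.length := this

lemma sep_dist (hG : G.Connected) {x s a : V}
    (hsep : ∀ w : G.Walk x s, a ∈ w.support) :
    G.dist x s = G.dist x a + G.dist a s := by
  refine le_antisymm (hG.dist_triangle) ?_
  obtain ⟨w, hw⟩ := (hG x s).exists_walk_length_eq_dist
  rw [← hw]
  exact dist_add_dist_le_length w (hsep w)

end WalkHelpers

section Anchor
variable {V : Type*} [Fintype V] [DecidableEq V] {G : SimpleGraph V} [DecidableRel G.Adj]

/-- `a` separates `x` from level-`m` stem set. -/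
def StemSep (G : SimpleGraph V) [DecidableRel G.Adj] (m : ℕ) (a x : V) : Prop :=
  a ∈ stemSet G m ∧ ∀ s ∈ stemSet G m, ∀ w : G.Walk x s, a ∈ w.support

/-- If every vertex has an anchor at level m, a non-stem vertex adjacent to a stem vertex
has that stem vertex as separator. -/
lemma sep_of_adj_aux {m : ℕ} (hanch : ∀ x : V, ∃ a, StemSep G m a x)
    {y c : V} (hy : y ∉ stemSet G m) (hc : c ∈ stemSet G m) (hadj : G.Adj y c) :
    ∀ s ∈ stemSet G m, ∀ w : G.Walk y s, c ∈ w.support := by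
  obtain ⟨a, ham, hsep⟩ := hanch y
  have hedge := hsep c hc (SimpleGraph.Walk.cons hadj SimpleGraph.Walk.nil)
  simp only [SimpleGraph.Walk.support_cons, SimpleGraph.Walk.support_nil,
    List.mem_cons, List.mem_singleton] at hedge
  have hac : a = c := by
    rcases hedge with rfl | rfl | h
    · exact absurd ham hy
    · rfl
    · exact absurd h List.not_mem_nil
  subst hac
  exact hsep

/-- From a vertex of the stem set, some walk to another stem vertex exists, hence
an adjacent stem vertex exists. -/
lemma exists_adj_stem_aux {m : ℕ} (hanch : ∀ x : V, ∃ a, StemSep G m a x)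
    {a : V} (_ha : a ∈ stemSet G m) :
    ∀ n (s : V), s ∈ stemSet G m → s ≠ a → ∀ w : G.Walk a s, w.length ≤ n →
      ∃ b ∈ stemSet G m, G.Adj a b := by
  intro n
  induction n with
  | zero =>
    intro s hs hsa w hw
    cases w with
    | nil => exact absurd rfl hsa.symm
    | cons h w' => simp at hw
  | succ n ih =>
    intro s hs hsa w hw
    cases w with
    | nil => exact absurd rfl hsa.symm
    | @cons _ y _ h w' =>
      by_cases hy : y ∈ stemSet G m
      · exact ⟨y, hy, h⟩
      · have hmem : a ∈ w'.support := sep_of_adj_aux hanch hy _ha h.symm s hs w'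
        have hlen : (w'.dropUntil a hmem).length ≤ n := by
          have := SimpleGraph.Walk.length_dropUntil_le w' hmem
          simp only [SimpleGraph.Walk.length_cons] at hw
          omega
        exact ih s hs hsa (w'.dropUntil a hmem) hlen

/-- Descent lemma: if `a ∈ stem m` has a unique stem-neighbour `b`, every walk from `a`
to another stem vertex passes `b`. -/
lemma sep_unique_nbr_aux {m : ℕ} (hanch : ∀ x : V, ∃ a, StemSep G m a x)
    {a b : V} (_ha : a ∈ stemSet G m) (hb : b ∈ stemSet G m) (hab : G.Adj a b)
    (huniq : ∀ c ∈ stemSet G m, G.Adj a c → c = b) :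
    ∀ n (s : V), s ∈ stemSet G m → s ≠ a → ∀ w : G.Walk a s, w.length ≤ n →
      b ∈ w.support := by
  intro n
  induction n with
  | zero =>
    intro s hs hsa w hw
    cases w with
    | nil => exact absurd rfl hsa.symm
    | cons h w' => simp at hw
  | succ n ih =>
    intro s hs hsa w hw
    cases w with
    | nil => exact absurd rfl hsa.symm
    | @cons _ y _ h w' =>
      by_cases hy : y ∈ stemSet G m
      · have : y = b := huniq y hy h
        subst this
        simp [SimpleGraph.Walk.support_cons]
      · have hmem : a ∈ w'.support := sep_of_adj_aux hanch hy _ha h.symm s hs w'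
        have hlen : (w'.dropUntil a hmem).length ≤ n := by
          have := SimpleGraph.Walk.length_dropUntil_le w' hmem
          simp only [SimpleGraph.Walk.length_cons] at hw
          omega
        have := ih s hs hsa (w'.dropUntil a hmem) hlen
        have hsub := SimpleGraph.Walk.support_dropUntil_subset w' hmem
        simp only [SimpleGraph.Walk.support_cons, List.mem_cons]
        exact Or.inr (hsub this)

theorem anchor_exists (hG : G.Connected) :
    ∀ m : ℕ, (stemSet G m).Nonempty → ∀ x : V, ∃ a, StemSep G m a x := by
  intro m
  induction m with
  | zero =>
    intro _ x
    exact ⟨x, by simp [StemSep, stemSet, stemIter], fun s _ w => w.start_mem_support⟩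
  | succ m ih =>
    intro hne x
    have hne' : (stemSet G m).Nonempty := by
      obtain ⟨y, hy⟩ := hne
      exact ⟨y, stemSet_succ_subset G m hy⟩
    have hanch := ih hne'
    obtain ⟨a, ham, hsep⟩ := hanch x
    by_cases hmem : a ∈ stemSet G (m+1)
    · exact ⟨a, hmem, fun s hs w => hsep s (stemSet_succ_subset G m hs) w⟩
    · -- a has ≤ 1 stem-m neighbour
      have hdeg : degIn G (stemSet G m) a ≤ 1 := degIn_le_one_of_not_mem_succ ham hmem
      obtain ⟨s₀, hs₀⟩ := hne
      have hs₀m : s₀ ∈ stemSet G m := stemSet_succ_subset G m hs₀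
      have hs₀a : s₀ ≠ a := fun h => hmem (h ▸ hs₀)
      obtain ⟨w₀⟩ := hG a s₀
      obtain ⟨b, hbm, hab⟩ :=
        exists_adj_stem_aux hanch ham w₀.length s₀ hs₀m hs₀a w₀ le_rfl
      have huniq : ∀ c ∈ stemSet G m, G.Adj a c → c = b :=
        fun c hc hac => eq_of_degIn_le_one hdeg hbm hab hc hac
      have hsepb : ∀ (s : V), s ∈ stemSet G m → s ≠ a → ∀ w : G.Walk a s, b ∈ w.support :=
        fun s hs hsa w => sep_unique_nbr_aux hanch ham hbm hab huniq w.length s hs hsa w le_rfl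
      -- b must be in stem (m+1): infinite descent otherwise
      have hbmem : b ∈ stemSet G (m+1) := by
        by_contra hbnot
        have hdegb : degIn G (stemSet G m) b ≤ 1 := degIn_le_one_of_not_mem_succ hbm hbnot
        have huniqb : ∀ c ∈ stemSet G m, G.Adj b c → c = a :=
          fun c hc hbc => eq_of_degIn_le_one hdegb ham hab.symm hc hbc
        have hsepa : ∀ (s : V), s ∈ stemSet G m → s ≠ b → ∀ w : G.Walk b s, a ∈ w.support :=
          fun s hs hsb w =>
            sep_unique_nbr_aux hanch hbm ham hab.symm huniqb w.length s hs hsb w le_rfl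
        have hs₀b : s₀ ≠ b := fun h => hbnot (h ▸ hs₀)
        have key : ∀ n, (∀ w : G.Walk a s₀, w.length ≤ n → False) ∧
            (∀ w : G.Walk b s₀, w.length ≤ n → False) := by
          intro n
          induction n with
          | zero =>
            constructor
            · intro w hw
              have : w.length = 0 := Nat.le_zero.mp hw
              exact hs₀a ((SimpleGraph.Walk.eq_of_length_eq_zero this)).symm
            · intro w hw
              have : w.length = 0 := Nat.le_zero.mp hw
              exact hs₀b ((SimpleGraph.Walk.eq_of_length_eq_zero this)).symm
          | succ n ihn =>
            constructor
            · intro w hw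
              have hbmem' : b ∈ w.support := hsepb s₀ hs₀m hs₀a w
              have hba : b ≠ a := hab.ne'
              have hlt := length_dropUntil_lt w hbmem' hba
              exact ihn.2 (w.dropUntil b hbmem') (by omega)
            · intro w hw
              have hamem' : a ∈ w.support := hsepa s₀ hs₀m hs₀b w
              have hba : a ≠ b := hab.ne
              have hlt := length_dropUntil_lt w hamem' hba
              exact ihn.1 (w.dropUntil a hamem') (by omega)
        exact (key w₀.length).1 w₀ le_rfl
      refine ⟨b, hbmem, fun s hs w => ?_⟩
      have hsm : s ∈ stemSet G m := stemSet_succ_subset G m hs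
      have hamem' : a ∈ w.support := hsep s hsm w
      have hsa : s ≠ a := fun h => hmem (h ▸ hs)
      have := hsepb s hsm hsa (w.dropUntil a hamem')
      exact SimpleGraph.Walk.support_dropUntil_subset w hamem' this

end Anchor

section Chains
variable {V : Type*} [Fintype V] [DecidableEq V] {G : SimpleGraph V} [DecidableRel G.Adj]

/-- A chain in `A`: successive distinct adjacent vertices, interior degree 2, start degree 1. -/
def IsChainIn (G : SimpleGraph V) [DecidableRel G.Adj] (A : Finset V) (d : ℕ) (q : ℕ → V) :
    Prop :=
  (∀ i ≤ d, q i ∈ A) ∧ (∀ i < d, G.Adj (q i) (q (i+1))) ∧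
  (∀ i j, i ≤ d → j ≤ d → q i = q j → i = j) ∧
  (∀ i, 1 ≤ i → i < d → degIn G A (q i) = 2) ∧ degIn G A (q 0) = 1

lemma path_interior_mem {m : ℕ} :
    ∀ {x y : V} (p : G.Walk x y), p.IsPath → (∀ z ∈ p.support, z ∈ stemSet G m) →
      x ∈ stemSet G (m+1) → y ∈ stemSet G (m+1) → ∀ z ∈ p.support, z ∈ stemSet G (m+1) := by
  intro x y p
  induction p with
  | nil =>
    intro _ _ hx _ z hz
    simp only [SimpleGraph.Walk.support_nil, List.mem_singleton] at hz
    exact hz ▸ hx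
  | @cons x x₁ y h p ih =>
    intro hp hsup hx hy z hz
    simp only [SimpleGraph.Walk.support_cons, List.mem_cons] at hz
    rcases hz with rfl | hz
    · exact hx
    · have hx₁ : x₁ ∈ stemSet G (m+1) := by
        cases p with
        | nil => exact hy
        | @cons _ x₂ _ h₂ p₂ =>
          have hxnot : x ∉ (SimpleGraph.Walk.cons h₂ p₂).support :=
            (SimpleGraph.Walk.cons_isPath_iff h _).1 hp |>.2
          have hx₂mem : x₂ ∈ (SimpleGraph.Walk.cons h₂ p₂).support := by
            simp [SimpleGraph.Walk.support_cons]
          have hxx₂ : x ≠ x₂ := fun hEq => hxnot (hEq ▸ hx₂mem)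
          have hxm : x ∈ stemSet G m := hsup x (by simp [SimpleGraph.Walk.support_cons])
          have hx₂m : x₂ ∈ stemSet G m := by
            apply hsup
            simp only [SimpleGraph.Walk.support_cons, List.mem_cons]
            right; right; exact SimpleGraph.Walk.start_mem_support p₂
          have hx₁m : x₁ ∈ stemSet G m := hsup x₁ (by simp [SimpleGraph.Walk.support_cons])
          have hdeg : 2 ≤ degIn G (stemSet G m) x₁ :=
            two_le_degIn_of_two_adj hxm h.symm hx₂m h₂ hxx₂
          exact (mem_stemSet_succ G).2 ⟨hx₁m, by omega⟩
      exact ih ((SimpleGraph.Walk.cons_isPath_iff h p).1 hp).1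
        (fun w hw => hsup w (by simp [SimpleGraph.Walk.support_cons, hw])) hx₁ hy z hz

lemma stem_walk (hG : G.Connected) :
    ∀ (m : ℕ) (x y : V), x ∈ stemSet G m → y ∈ stemSet G m →
      ∃ w : G.Walk x y, ∀ z ∈ w.support, z ∈ stemSet G m := by
  intro m
  induction m with
  | zero =>
    intro x y _ _
    obtain ⟨w⟩ := hG x y
    exact ⟨w, fun z _ => by simp [stemSet, stemIter]⟩
  | succ m ih =>
    intro x y hx hy
    obtain ⟨w, hw⟩ := ih x y (stemSet_succ_subset G m hx) (stemSet_succ_subset G m hy)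
    refine ⟨w.bypass, ?_⟩
    exact path_interior_mem w.bypass (SimpleGraph.Walk.bypass_isPath w)
      (fun z hz => hw z (SimpleGraph.Walk.support_bypass_subset w hz)) hx hy

lemma exists_chain_walk {d : ℕ} {q : ℕ → V} (hadj : ∀ i < d, G.Adj (q i) (q (i+1))) :
    ∃ w : G.Walk (q 0) (q d), w.length = d ∧ (∀ z, z ∈ w.support ↔ ∃ i ≤ d, q i = z) ∧
      ((∀ i j, i ≤ d → j ≤ d → q i = q j → i = j) → w.support.Nodup) := by
  induction d with
  | zero =>
    refine ⟨SimpleGraph.Walk.nil, rfl, ?_, ?_⟩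
    · intro z
      simp only [SimpleGraph.Walk.support_nil, List.mem_singleton]
      constructor
      · rintro rfl; exact ⟨0, le_rfl, rfl⟩
      · rintro ⟨i, hi, rfl⟩; rw [Nat.le_zero.mp hi]
    · intro _; simp
  | succ d ih =>
    obtain ⟨w, hlen, hmem, hnd⟩ := ih (fun i hi => hadj i (by omega))
    refine ⟨w.concat (hadj d (by omega)), ?_, ?_, ?_⟩
    · rw [SimpleGraph.Walk.length_concat, hlen]
    · intro z
      rw [SimpleGraph.Walk.support_concat, List.mem_append]
      constructor
      · rintro (hz | hz)
        · obtain ⟨i, hi, rfl⟩ := (hmem z).1 hz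
          exact ⟨i, by omega, rfl⟩
        · simp only [List.mem_singleton] at hz
          exact ⟨d+1, le_rfl, hz.symm⟩
      · rintro ⟨i, hi, rfl⟩
        rcases Nat.lt_or_ge i (d+1) with h' | h'
        · exact Or.inl ((hmem (q i)).2 ⟨i, by omega, rfl⟩)
        · have : i = d + 1 := by omega
          subst this; simp
    · intro hinj
      rw [SimpleGraph.Walk.support_concat]
      rw [List.nodup_append]
      refine ⟨hnd (fun i j hi hj hEq => hinj i j (by omega) (by omega) hEq), by simp, ?_⟩
      intro z hz
      obtain ⟨i, hi, rfl⟩ := (hmem z).1 hz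
      simp only [List.mem_singleton, forall_eq]
      intro hEq
      have := hinj i (d+1) (by omega) le_rfl hEq
      omega

lemma chain_share {A : Finset V} {d1 d2 : ℕ} {q1 q2 : ℕ → V}
    (h1 : IsChainIn G A d1 q1) (h2 : IsChainIn G A d2 q2)
    (h2e : 3 ≤ degIn G A (q2 d2)) :
    ∀ i j, i < d1 → j < d2 → q1 i = q2 j → q1 0 = q2 0 := by
  obtain ⟨hmem1, hadj1, hinj1, hint1, hleaf1⟩ := h1
  obtain ⟨hmem2, hadj2, hinj2, hint2, hleaf2⟩ := h2
  intro i
  induction i with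
  | zero =>
    intro j hi hj hEq
    rcases Nat.eq_zero_or_pos j with rfl | hjpos
    · exact hEq
    · exfalso
      have := hint2 j hjpos hj
      rw [← hEq, hleaf1] at this
      omega
  | succ i ih =>
    intro j hi hj hEq
    rcases Nat.eq_zero_or_pos j with rfl | hjpos
    · exfalso
      have := hint1 (i+1) (by omega) hi
      rw [hEq, hleaf2] at this
      omega
    · -- q1 i is adjacent to q2 j, so equals q2 (j-1) or q2 (j+1)
      obtain ⟨j', rfl⟩ : ∃ j', j = j' + 1 := ⟨j - 1, by omega⟩
      have hdeg2 : degIn G A (q2 (j'+1)) ≤ 2 := le_of_eq (hint2 (j'+1) (by omega) hj)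
      have hadjc : G.Adj (q2 (j'+1)) (q1 i) := by
        rw [← hEq]; exact (hadj1 i (by omega)).symm
      have hne : q2 j' ≠ q2 (j'+2) := fun hc => by
        have := hinj2 j' (j'+2) (by omega) (by omega) hc; omega
      have := mem_pair_of_degIn_le_two hdeg2 (hmem2 j' (by omega)) (hadj2 j' (by omega)).symm
        (hmem2 (j'+2) (by omega)) (hadj2 (j'+1) (by omega)) hne
        (hmem1 i (by omega)) hadjc
      rcases this with hcase | hcase
      · exact ih j' (by omega) (by omega) hcase
      · rcases Nat.lt_or_ge (j'+2) d2 with h' | h'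
        · exact ih (j'+2) (by omega) h' hcase
        · have hj2 : j' + 2 = d2 := by omega
          exfalso
          rw [hj2] at hcase
          rcases Nat.eq_zero_or_pos i with rfl | hipos
          · rw [← hcase, hleaf1] at h2e
            omega
          · have hx := hint1 i hipos (by omega)
            rw [hcase] at hx
            omega

lemma exists_new_nbr {A B : Finset V} (hAB : A ⊆ B) {v : V}
    (h2 : 2 ≤ degIn G B v) (h1 : degIn G A v ≤ 1) :
    ∃ c, c ∈ B ∧ c ∉ A ∧ G.Adj v c := by
  by_contra hc
  push_neg at hc
  have hsub : (B.filter fun w => G.Adj v w) ⊆ A.filter fun w => G.Adj v w := by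
    intro z hz
    rw [Finset.mem_filter] at hz ⊢
    by_cases hzA : z ∈ A
    · exact ⟨hzA, hz.2⟩
    · exact absurd hz.2 (hc z hz.1 hzA)
  have := Finset.card_le_card hsub
  simp only [degIn] at h2 h1
  omega

/-- Descent chain below a leaf of `stemSet G r`. -/
lemma exists_descent {r : ℕ} {u : V} (hu : u ∈ stemSet G r)
    (hdeg : degIn G (stemSet G r) u = 1) :
    ∃ y : ℕ → V, y 0 = u ∧ ∀ j < r, G.Adj (y j) (y (j+1)) ∧
      y (j+1) ∈ stemSet G (r - (j+1)) ∧ y (j+1) ∉ stemSet G (r - j) := by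
  suffices h : ∀ k ≤ r, ∃ y : ℕ → V, y 0 = u ∧ ∀ j < k, G.Adj (y j) (y (j+1)) ∧
      y (j+1) ∈ stemSet G (r - (j+1)) ∧ y (j+1) ∉ stemSet G (r - j) by
    exact h r le_rfl
  intro k
  induction k with
  | zero => exact fun _ => ⟨fun _ => u, rfl, fun j hj => by omega⟩
  | succ k ih =>
    intro hk
    obtain ⟨y, hy0, hy⟩ := ih (by omega)
    -- current end: y k ∈ stemSet G (r - k), with degree ≤ 1 there
    have hyk_mem : y k ∈ stemSet G (r - k) := by
      rcases Nat.eq_zero_or_pos k with rfl | hkpos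
      · simpa [hy0]
      · have h := (hy (k-1) (by omega)).2.1
        rw [show k - 1 + 1 = k by omega] at h
        exact h
    have hyk_deg : degIn G (stemSet G (r - k)) (y k) ≤ 1 := by
      rcases Nat.eq_zero_or_pos k with rfl | hkpos
      · simpa [hy0] using le_of_eq hdeg
      · have hnot : y k ∉ stemSet G (r - (k-1)) := by
          have h := (hy (k-1) (by omega)).2.2
          rwa [show k - 1 + 1 = k by omega] at h
        have : r - (k-1) = (r - k) + 1 := by omega
        rw [this] at hnot
        exact degIn_le_one_of_not_mem_succ hyk_mem hnot
    have hmem' : y k ∈ stemSet G ((r - (k+1)) + 1) := by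
      have : (r - (k+1)) + 1 = r - k := by omega
      rw [this]; exact hyk_mem
    have h2 : 2 ≤ degIn G (stemSet G (r - (k+1))) (y k) := two_le_degIn_of_mem_succ hmem'
    have hsub : stemSet G (r - k) ⊆ stemSet G (r - (k+1)) := stemSet_subset G (by omega)
    obtain ⟨c, hcB, hcA, hcadj⟩ := exists_new_nbr hsub h2 hyk_deg
    refine ⟨fun i => if i ≤ k then y i else c, by simp [hy0], ?_⟩
    intro j hj
    rcases Nat.lt_or_ge j k with h' | h'
    · simpa [show j ≤ k by omega, show j + 1 ≤ k by omega] using hy j h'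
    · have : j = k := by omega
      subst this
      simp only [le_rfl, if_pos, show ¬ (j + 1 ≤ j) by omega, if_neg, not_false_iff]
      exact ⟨hcadj, hcB, hcA⟩

end Chains

section MaxChain
variable {V : Type*} [Fintype V] [DecidableEq V] {G : SimpleGraph V} [DecidableRel G.Adj]

/-- If a chain in `stemSet G r` ends in another leaf, the stem is a path graph. -/
lemma isPathGraphOn_of_chain (hG : G.Connected) {r d : ℕ} {q : ℕ → V}
    (hch : IsChainIn G (stemSet G r) d q) (hend : degIn G (stemSet G r) (q d) = 1)
    (hd : 1 ≤ d) : IsPathGraphOn G (stemSet G r) := by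
  obtain ⟨hmem, hadj, hinj, hint, hleaf⟩ := hch
  set A := stemSet G r with hA
  -- all neighbours of chain vertices are chain vertices
  have hnbr : ∀ i ≤ d, ∀ c ∈ A, G.Adj (q i) c → ∃ j ≤ d, q j = c := by
    intro i hi c hc hadjc
    rcases Nat.eq_zero_or_pos i with rfl | hipos
    · have : c = q 1 := eq_of_degIn_le_one (le_of_eq hleaf) (hmem 1 hd) (hadj 0 hd) hc hadjc
      exact ⟨1, hd, this.symm⟩
    · rcases Nat.lt_or_ge i d with hid | hid
      · have h2 : degIn G A (q i) ≤ 2 := le_of_eq (hint i hipos hid)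
        have hne : q (i-1) ≠ q (i+1) := fun hEq => by
          have := hinj (i-1) (i+1) (by omega) (by omega) hEq; omega
        have hadjl : G.Adj (q i) (q (i-1)) := by
          have := hadj (i-1) (by omega)
          rw [show i - 1 + 1 = i by omega] at this
          exact this.symm
        have := mem_pair_of_degIn_le_two h2 (hmem (i-1) (by omega)) hadjl
          (hmem (i+1) (by omega)) (hadj i hid) hne hc hadjc
        rcases this with rfl | rfl
        · exact ⟨i-1, by omega, rfl⟩
        · exact ⟨i+1, by omega, rfl⟩
      · have hieq : i = d := by omega
        have hadjl : G.Adj (q d) (q (d-1)) := by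
          have := hadj (d-1) (by omega)
          rw [show d - 1 + 1 = d by omega] at this
          exact this.symm
        have hadjc' : G.Adj (q d) c := by rw [hieq] at hadjc; exact hadjc
        have hEq : c = q (d-1) :=
          eq_of_degIn_le_one (le_of_eq hend) (hmem (d-1) (by omega)) hadjl hc hadjc'
        exact ⟨d-1, by omega, hEq.symm⟩
  -- covering
  have hclosed : ∀ (t z' : V) (w : G.Walk t z'), (∀ x ∈ w.support, x ∈ A) →
      (∃ j ≤ d, q j = t) → ∃ j ≤ d, q j = z' := by
    intro t z' w
    induction w with
    | nil => exact fun _ h => h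
    | @cons a b c2 hadj' w' ih =>
      intro hsup ht
      obtain ⟨j, hj, rfl⟩ := ht
      have hb : b ∈ A := hsup b (by simp [SimpleGraph.Walk.support_cons])
      refine ih (fun x hx => hsup x ?_) (hnbr j hj b hb hadj')
      simp only [SimpleGraph.Walk.support_cons, List.mem_cons]
      exact Or.inr hx
  have hcover : ∀ z ∈ A, ∃ j ≤ d, q j = z := by
    intro z hz
    obtain ⟨w, hw⟩ := stem_walk hG r (q 0) z (hmem 0 (by omega)) hz
    exact hclosed (q 0) z w hw ⟨0, by omega, rfl⟩
  -- the bijection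
  have hmem' : ∀ i : Fin (d+1), q ↑i ∈ (↑A : Set V) := fun i => by
    have : (i : ℕ) ≤ d := Nat.lt_succ_iff.mp i.isLt
    simpa using hmem _ this
  let f : Fin (d+1) → (↑A : Set V) := fun i => ⟨q ↑i, hmem' i⟩
  have hfinj : Function.Injective f := by
    intro a b hEq
    have : q ↑a = q ↑b := congrArg Subtype.val hEq
    have := hinj ↑a ↑b (Nat.lt_succ_iff.mp a.isLt) (Nat.lt_succ_iff.mp b.isLt) this
    exact Fin.ext this
  have hfsurj : Function.Surjective f := by
    rintro ⟨z, hz⟩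
    have hzA : z ∈ A := by simpa using hz
    obtain ⟨j, hj, rfl⟩ := hcover z hzA
    exact ⟨⟨j, by omega⟩, rfl⟩
  have hiff : ∀ i j : Fin (d+1), (pathGraph (d+1)).Adj i j ↔ (G.induce (↑A : Set V)).Adj (f i) (f j) := by
    intro i j
    rw [pathGraph_adj]
    have hi : (i : ℕ) ≤ d := Nat.lt_succ_iff.mp i.isLt
    have hj : (j : ℕ) ≤ d := Nat.lt_succ_iff.mp j.isLt
    constructor
    · rintro (hEq | hEq)
      · have hadj' : G.Adj (q ↑i) (q ↑j) := by
          have := hadj ↑i (by omega)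
          rwa [show (i : ℕ) + 1 = ↑j from hEq] at this
        exact hadj'
      · have hadj' : G.Adj (q ↑i) (q ↑j) := by
          have := hadj ↑j (by omega)
          rw [show (j : ℕ) + 1 = ↑i from hEq] at this
          exact this.symm
        exact hadj'
    · intro hadj'
      have hGadj : G.Adj (q ↑i) (q ↑j) := hadj'
      obtain ⟨j', hj', hEq⟩ := hnbr ↑i hi (q ↑j) (hmem ↑j hj) hGadj
      have hjj' : (j : ℕ) = j' := hinj ↑j j' hj hj' hEq.symm
      -- j' is a neighbour index of i along the chain
      rcases Nat.eq_zero_or_pos (i : ℕ) with hi0 | hipos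
      · -- i = 0 : unique nbr is q 1
        have hGadj0 : G.Adj (q 0) (q ↑j) := by rw [hi0] at hGadj; exact hGadj
        have hEq1 : q ↑j = q 1 :=
          eq_of_degIn_le_one (le_of_eq hleaf) (hmem 1 hd) (hadj 0 hd) (hmem ↑j hj) hGadj0
        have : (j : ℕ) = 1 := hinj ↑j 1 hj hd hEq1
        omega
      · rcases Nat.lt_or_ge (i : ℕ) d with hid | hid
        · have h2 : degIn G A (q ↑i) ≤ 2 := le_of_eq (hint ↑i hipos hid)
          have hne : q ((i : ℕ)-1) ≠ q ((i : ℕ)+1) := fun hEq2 => by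
            have := hinj ((i : ℕ)-1) ((i : ℕ)+1) (by omega) (by omega) hEq2; omega
          have hadjl : G.Adj (q ↑i) (q ((i : ℕ)-1)) := by
            have := hadj ((i : ℕ)-1) (by omega)
            rw [show (i : ℕ) - 1 + 1 = ↑i by omega] at this
            exact this.symm
          have := mem_pair_of_degIn_le_two h2 (hmem ((i : ℕ)-1) (by omega)) hadjl
            (hmem ((i : ℕ)+1) (by omega)) (hadj ↑i hid) hne (hmem ↑j hj) hGadj
          rcases this with hEq2 | hEq2
          · have := hinj ↑j ((i : ℕ)-1) hj (by omega) hEq2; omega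
          · have := hinj ↑j ((i : ℕ)+1) hj (by omega) hEq2; omega
        · have hieq : (i : ℕ) = d := by omega
          have hadjl : G.Adj (q ↑i) (q (d-1)) := by
            have h := hadj (d-1) (by omega)
            rw [show d - 1 + 1 = d by omega] at h
            rw [hieq]
            exact h.symm
          have hend' : degIn G A (q ↑i) = 1 := by rw [hieq]; exact hend
          have hEq1 : q ↑j = q (d-1) :=
            eq_of_degIn_le_one (le_of_eq hend') (hmem (d-1) (by omega)) hadjl
              (hmem ↑j hj) hGadj
          have := hinj ↑j (d-1) hj (by omega) hEq1
          omega
  refine ⟨d+1, ⟨{ toEquiv := (Equiv.ofBijective f ⟨hfinj, hfsurj⟩).symm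
                  map_rel_iff' := ?_ }⟩⟩
  intro a b
  have ha : f ((Equiv.ofBijective f ⟨hfinj, hfsurj⟩).symm a) = a :=
    (Equiv.ofBijective f ⟨hfinj, hfsurj⟩).apply_symm_apply a
  have hb : f ((Equiv.ofBijective f ⟨hfinj, hfsurj⟩).symm b) = b :=
    (Equiv.ofBijective f ⟨hfinj, hfsurj⟩).apply_symm_apply b
  rw [hiff ((Equiv.ofBijective f ⟨hfinj, hfsurj⟩).symm a)
    ((Equiv.ofBijective f ⟨hfinj, hfsurj⟩).symm b), ha, hb]

/-- every leaf of a non-path stem extends to a chain ending at an exterior major vertex -/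
lemma exists_leafChain (hG : G.Connected) {r : ℕ} (hnp : ¬ IsPathGraphOn G (stemSet G r))
    {u : V} (hu : u ∈ stemSet G r) (hdeg : degIn G (stemSet G r) u = 1) :
    ∃ d q, q 0 = u ∧ IsChainIn G (stemSet G r) d q ∧ 1 ≤ d ∧
      3 ≤ degIn G (stemSet G r) (q d) := by
  classical
  set A := stemSet G r with hA
  set P : ℕ → Prop := fun d => ∃ q : ℕ → V, q 0 = u ∧ IsChainIn G A d q with hP
  have hP0 : P 0 := by
    refine ⟨fun _ => u, rfl, fun i _ => hu, fun i hi => by omega, fun i j hi hj _ => by omega,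
      fun i hi h2 => by omega, hdeg⟩
  have hbound : ∀ e, P e → e + 1 ≤ Fintype.card V := by
    rintro e ⟨q, hq0, hmem, hadj, hinj, hint, hleaf⟩
    have : Function.Injective (fun i : Fin (e+1) => q ↑i) := by
      intro a b hEq
      exact Fin.ext (hinj ↑a ↑b (Nat.lt_succ_iff.mp a.isLt) (Nat.lt_succ_iff.mp b.isLt) hEq)
    simpa using Fintype.card_le_of_injective _ this
  -- extension lemma
  have hext : ∀ d (q : ℕ → V), q 0 = u → IsChainIn G A d q →
      (d = 0 ∨ degIn G A (q d) = 2) → P (d+1) := by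
    rintro d q hq0 ⟨hmem, hadj, hinj, hint, hleaf⟩ hcase
    -- find the fresh next vertex c
    have hstep : ∃ c, c ∈ A ∧ G.Adj (q d) c ∧ (1 ≤ d → c ≠ q (d-1)) := by
      rcases hcase with rfl | hdeg2
      · have hpos : 0 < (A.filter fun w => G.Adj (q 0) w).card := by
          rw [show (A.filter fun w => G.Adj (q 0) w).card = degIn G A (q 0) from rfl, hleaf]
          omega
        obtain ⟨c, hc⟩ := Finset.card_pos.mp hpos
        rw [Finset.mem_filter] at hc
        exact ⟨c, hc.1, hc.2, fun h => by omega⟩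
      · have hd1 : 1 ≤ d := by
          by_contra h
          have : d = 0 := by omega
          rw [this] at hdeg2; rw [hdeg2] at hleaf; omega
        have hcard : 1 < (A.filter fun w => G.Adj (q d) w).card := by
          rw [show (A.filter fun w => G.Adj (q d) w).card = degIn G A (q d) from rfl, hdeg2]
          omega
        obtain ⟨c, hc, hcne⟩ := Finset.exists_mem_ne hcard (q (d-1))
        rw [Finset.mem_filter] at hc
        exact ⟨c, hc.1, hc.2, fun _ => hcne⟩
    obtain ⟨c, hcA, hcadj, hcne⟩ := hstep
    have hfresh : ∀ j ≤ d, c ≠ q j := by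
      intro j hj hEq
      rcases Nat.eq_or_lt_of_le hj with rfl | hjd
      · exact G.irrefl (hEq ▸ hcadj)
      · have hd1 : 1 ≤ d := by omega
        have hcne' := hcne hd1
        rcases Nat.eq_or_lt_of_le (show j ≤ d - 1 by omega) with hjd1 | hjlt
        · exact hcne' (hjd1 ▸ hEq)
        · -- j < d - 1
          rcases Nat.eq_zero_or_pos j with rfl | hjpos
          · -- q 0 has unique nbr q 1
            have hadj0d : G.Adj (q 0) (q d) := by rw [← hEq]; exact hcadj.symm
            have : q d = q 1 :=
              eq_of_degIn_le_one (le_of_eq hleaf) (hmem 1 hd1) (hadj 0 hd1)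
                (hmem d le_rfl) hadj0d
            have := hinj d 1 le_rfl hd1 this
            omega
          · have h2 : degIn G A (q j) ≤ 2 := le_of_eq (hint j hjpos (by omega))
            have hne2 : q (j-1) ≠ q (j+1) := fun hEq2 => by
              have := hinj (j-1) (j+1) (by omega) (by omega) hEq2; omega
            have hadjl : G.Adj (q j) (q (j-1)) := by
              have := hadj (j-1) (by omega)
              rw [show j - 1 + 1 = j by omega] at this
              exact this.symm
            have hadjd : G.Adj (q j) (q d) := by rw [← hEq]; exact hcadj.symm
            have := mem_pair_of_degIn_le_two h2 (hmem (j-1) (by omega)) hadjl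
              (hmem (j+1) (by omega)) (hadj j (by omega)) hne2 (hmem d le_rfl) hadjd
            rcases this with hEq2 | hEq2
            · have := hinj d (j-1) le_rfl (by omega) hEq2; omega
            · have := hinj d (j+1) le_rfl (by omega) hEq2; omega
    refine ⟨fun i => if i ≤ d then q i else c, by simp [hq0], ?_, ?_, ?_, ?_, ?_⟩
    · intro i hi
      by_cases h : i ≤ d
      · simpa [h] using hmem i h
      · simpa [h] using hcA
    · intro i hi
      rcases Nat.lt_or_ge i d with h | h
      · simpa [show i ≤ d by omega, show i + 1 ≤ d by omega] using hadj i h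
      · have : i = d := by omega
        subst this
        simpa [show i ≤ i from le_rfl, show ¬ (i + 1 ≤ i) by omega] using hcadj
    · intro i j hi hj hEq
      by_cases h1 : i ≤ d <;> by_cases h2 : j ≤ d
      · simp only [h1, if_pos, h2] at hEq
        exact hinj i j h1 h2 hEq
      · simp only [h1, if_pos, h2, if_neg, not_false_iff] at hEq
        exact absurd hEq.symm (hfresh i h1)
      · simp only [h1, if_neg, not_false_iff, h2, if_pos] at hEq
        exact absurd hEq (hfresh j h2)
      · omega
    · intro i h1i hid
      have hi : i ≤ d := by omega
      rcases Nat.lt_or_ge i d with h | h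
      · simpa [hi] using hint i h1i h
      · have : i = d := by omega
        subst this
        rcases hcase with rfl | hdeg2
        · omega
        · simpa [hi] using hdeg2
    · simpa using hleaf
  -- maximal chain
  have hmax : ∃ d, P d ∧ ∀ e, P e → e ≤ d := by
    set N := Fintype.card V with hN
    set s : Finset ℕ := (Finset.range (N+1)).filter P with hs
    have hne : s.Nonempty :=
      ⟨0, Finset.mem_filter.mpr ⟨Finset.mem_range.mpr (by omega), hP0⟩⟩
    refine ⟨s.max' hne, (Finset.mem_filter.mp (s.max'_mem hne)).2, ?_⟩
    intro e he
    exact Finset.le_max' s e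
      (Finset.mem_filter.mpr ⟨Finset.mem_range.mpr (by have := hbound e he; omega), he⟩)
  obtain ⟨d, ⟨q, hq0, hch⟩, hmaxd⟩ := hmax
  have hd1 : 1 ≤ d := by
    by_contra h
    have hd0 : d = 0 := by omega
    have := hmaxd (d+1) (hext d q hq0 hch (Or.inl hd0))
    omega
  have hnot2 : degIn G A (q d) ≠ 2 := by
    intro h2
    have := hmaxd (d+1) (hext d q hq0 hch (Or.inr h2))
    omega
  obtain ⟨hmem, hadj, hinj, hint, hleaf⟩ := hch
  have hge1 : 1 ≤ degIn G A (q d) := by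
    apply one_le_degIn_of_adj (hmem (d-1) (by omega))
    have := hadj (d-1) (by omega)
    rw [show d - 1 + 1 = d by omega] at this
    exact this.symm
  have hnot1 : degIn G A (q d) ≠ 1 := by
    intro h1
    exact hnp (isPathGraphOn_of_chain hG ⟨hmem, hadj, hinj, hint, hleaf⟩ h1 hd1)
  exact ⟨d, q, hq0, ⟨hmem, hadj, hinj, hint, hleaf⟩, hd1, by omega⟩

end MaxChain

section Branch
variable {V : Type*} [Fintype V] [DecidableEq V] {G : SimpleGraph V} [DecidableRel G.Adj]

/-- The extended chain below a leaf chain, together with separation and distance facts. -/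
lemma branch_package (hG : G.Connected) {r : ℕ} (hne : (stemSet G r).Nonempty)
    {d : ℕ} {q : ℕ → V} (hch : IsChainIn G (stemSet G r) d q) (hd : 1 ≤ d) :
    ∃ z : ℕ → V,
      z 0 = q d ∧
      (∀ k ≤ d, z k = q (d - k)) ∧
      (∀ k, d < k → k ≤ d + r → z k ∉ stemSet G r) ∧
      (∀ k < d + r, G.Adj (z k) (z (k+1))) ∧
      (∀ s, s ∈ stemSet G r → (∀ i < d, q i ≠ s) → ∀ k ≤ d + r,
        G.dist (z k) s = k + G.dist (q d) s) ∧
      (∀ s, s ∈ stemSet G r → (∀ i < d, q i ≠ s) → ∀ k, k ≤ d + r → ∀ j ≤ k,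
        ∀ w : G.Walk (z k) s, z j ∈ w.support) := by
  obtain ⟨hmem, hadj, hinj, hint, hleaf⟩ := hch
  set A := stemSet G r with hA
  obtain ⟨y, hy0, hy⟩ := exists_descent (hmem 0 (by omega)) hleaf
  have ymem : ∀ j ≤ r, y j ∈ stemSet G (r - j) := by
    intro j hj
    rcases Nat.eq_zero_or_pos j with rfl | hjpos
    · simpa [hy0] using hmem 0 (by omega)
    · have h := (hy (j-1) (by omega)).2.1
      rwa [show j - 1 + 1 = j by omega] at h
  have ynot : ∀ j, 1 ≤ j → j ≤ r → y j ∉ stemSet G (r - (j-1)) := by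
    intro j h1 h2
    have h := (hy (j-1) (by omega)).2.2
    rwa [show j - 1 + 1 = j by omega] at h
  have yadj : ∀ j < r, G.Adj (y j) (y (j+1)) := fun j hj => (hy j hj).1
  set z : ℕ → V := fun k => if k ≤ d then q (d - k) else y (k - d) with hz
  have hz0 : z 0 = q d := by simp [hz]
  have hzq : ∀ k ≤ d, z k = q (d - k) := fun k hk => by simp [hz, hk]
  have hzy : ∀ k, d < k → z k = y (k - d) := fun k hk => by
    simp [hz, show ¬ (k ≤ d) by omega]
  have hznot : ∀ k, d < k → k ≤ d + r → z k ∉ A := by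
    intro k h1 h2
    rw [hzy k h1]
    intro hmem'
    have hj1 : 1 ≤ k - d := by omega
    have hj2 : k - d ≤ r := by omega
    have hsub : stemSet G r ⊆ stemSet G (r - (k - d - 1)) := stemSet_subset G (by omega)
    exact ynot (k - d) hj1 hj2 (hsub hmem')
  have hzadj : ∀ k < d + r, G.Adj (z k) (z (k+1)) := by
    intro k hk
    rcases Nat.lt_or_ge k d with h | h
    · rw [hzq k (by omega), hzq (k+1) (by omega)]
      have := hadj (d - k - 1) (by omega)
      rw [show d - k - 1 + 1 = d - k by omega] at this
      rw [show d - (k+1) = d - k - 1 by omega]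
      exact this.symm
    · rcases Nat.eq_or_lt_of_le h with heq | h'
      · rw [hzq k (by omega), hzy (k+1) (by omega)]
        have hadj01 := yadj 0 (by omega)
        rw [hy0] at hadj01
        rw [show d - k = 0 by omega, show k + 1 - d = 1 by omega]
        exact hadj01
      · rw [hzy k h', hzy (k+1) (by omega)]
        have := yadj (k - d) (by omega)
        rwa [show k - d + 1 = k + 1 - d by omega] at this
  -- separation one step
  have hzsep : ∀ s, s ∈ A → (∀ i < d, q i ≠ s) → ∀ k, 1 ≤ k → k ≤ d + r →
      ∀ w : G.Walk (z k) s, z (k-1) ∈ w.support := by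
    intro s hsA hstail
    have hanchr : ∀ x : V, ∃ a, StemSep G r a x := anchor_exists hG r hne
    -- path regime helper
    have hPS : ∀ n, ∀ m', m' < d → ∀ w : G.Walk (q m') s, w.length ≤ n →
        q (m'+1) ∈ w.support := by
      intro n
      induction n with
      | zero =>
        intro m' hm' w hw
        cases w with
        | nil => exact absurd rfl (hstail m' hm')
        | cons h w' => simp at hw
      | succ n ih =>
        intro m' hm' w hw
        cases w with
        | nil => exact absurd rfl (hstail m' hm')
        | @cons _ c _ h w' =>
          by_cases hcA : c ∈ A
          · rcases Nat.eq_zero_or_pos m' with rfl | hmpos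
            · have : c = q 1 :=
                eq_of_degIn_le_one (le_of_eq hleaf) (hmem 1 hd) (hadj 0 hd) hcA h
              subst this
              simp [SimpleGraph.Walk.support_cons]
            · have h2 : degIn G A (q m') ≤ 2 := le_of_eq (hint m' hmpos hm')
              have hne2 : q (m'-1) ≠ q (m'+1) := fun hEq => by
                have := hinj (m'-1) (m'+1) (by omega) (by omega) hEq; omega
              have hadjl : G.Adj (q m') (q (m'-1)) := by
                have := hadj (m'-1) (by omega)
                rw [show m' - 1 + 1 = m' by omega] at this
                exact this.symm
              have := mem_pair_of_degIn_le_two h2 (hmem (m'-1) (by omega)) hadjl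
                (hmem (m'+1) (by omega)) (hadj m' hm') hne2 hcA h
              rcases this with rfl | rfl
              · -- went backwards: c = q (m'-1)
                have hret : q (m'-1+1) ∈ w'.support := ih (m'-1) (by omega) w' (by
                  simp only [SimpleGraph.Walk.length_cons] at hw; omega)
                rw [show m' - 1 + 1 = m' by omega] at hret
                have hlen : (w'.dropUntil (q m') hret).length ≤ n := by
                  have := SimpleGraph.Walk.length_dropUntil_le w' hret
                  simp only [SimpleGraph.Walk.length_cons] at hw
                  omega
                have := ih m' hm' (w'.dropUntil (q m') hret) hlen
                have hsub := SimpleGraph.Walk.support_dropUntil_subset w' hret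
                simp only [SimpleGraph.Walk.support_cons, List.mem_cons]
                exact Or.inr (hsub this)
              · simp [SimpleGraph.Walk.support_cons]
          · have hret : q m' ∈ w'.support :=
              sep_of_adj_aux hanchr hcA (hmem m' (by omega)) h.symm s hsA w'
            have hlen : (w'.dropUntil (q m') hret).length ≤ n := by
              have := SimpleGraph.Walk.length_dropUntil_le w' hret
              simp only [SimpleGraph.Walk.length_cons] at hw
              omega
            have := ih m' hm' (w'.dropUntil (q m') hret) hlen
            have hsub := SimpleGraph.Walk.support_dropUntil_subset w' hret
            simp only [SimpleGraph.Walk.support_cons, List.mem_cons]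
            exact Or.inr (hsub this)
    intro k h1 h2
    rcases Nat.lt_or_ge d k with h | h
    · -- descent regime
      have hj1 : 1 ≤ k - d := by omega
      have hj2 : k - d ≤ r := by omega
      set j := k - d with hjdef
      have hylev : y j ∉ stemSet G (r - (j-1)) := ynot j hj1 hj2
      have hyprev : y (j-1) ∈ stemSet G (r - (j-1)) := ymem (j-1) (by omega)
      have hyadj : G.Adj (y j) (y (j-1)) := by
        have := yadj (j-1) (by omega)
        rw [show j - 1 + 1 = j by omega] at this
        exact this.symm
      have hnel : (stemSet G (r - (j-1))).Nonempty := by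
        obtain ⟨t, ht⟩ := hne
        exact ⟨t, stemSet_subset G (by omega) ht⟩
      have hanchl : ∀ x : V, ∃ a, StemSep G (r - (j-1)) a x :=
        anchor_exists hG (r - (j-1)) hnel
      have hsepl := sep_of_adj_aux hanchl hylev hyprev hyadj s
        (stemSet_subset G (by omega) hsA)
      have hw : z k = y j := hzy k h
      have hzk1 : z (k-1) = y (j-1) := by
        rcases Nat.lt_or_ge d (k-1) with h' | h'
        · rw [hzy (k-1) h']
          congr 1
          omega
        · have hkd : k - 1 = d := by omega
          rw [hzq (k-1) (by omega), hkd]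
          have hj1' : j = 1 := by omega
          simp [hj1', ← hy0]
      rw [hw, hzk1]
      exact hsepl
    · -- path regime : k ≤ d
      have hzk : z k = q (d - k) := hzq k h
      have hzk1 : z (k-1) = q (d - k + 1) := by
        rw [hzq (k-1) (by omega)]
        congr 1
        omega
      rw [hzk, hzk1]
      have hmm : d - k < d := by omega
      exact fun w => hPS w.length (d - k) hmm w le_rfl
  -- iterated separation
  have hzsep_iter : ∀ s, s ∈ A → (∀ i < d, q i ≠ s) → ∀ k, k ≤ d + r → ∀ j ≤ k,
      ∀ w : G.Walk (z k) s, z j ∈ w.support := by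
    intro s hsA hstail k
    induction k with
    | zero =>
      intro _ j hj w
      rw [Nat.le_zero.mp hj]
      exact w.start_mem_support
    | succ k ih =>
      intro hk j hj w
      rcases Nat.eq_or_lt_of_le hj with rfl | hj'
      · exact w.start_mem_support
      · have hmemk : z k ∈ w.support := by
          have := hzsep s hsA hstail (k+1) (by omega) hk w
          rwa [show k + 1 - 1 = k by omega] at this
        have := ih (by omega) j (by omega) (w.dropUntil (z k) hmemk)
        exact SimpleGraph.Walk.support_dropUntil_subset w hmemk this
  -- distances
  have hzdist : ∀ s, s ∈ A → (∀ i < d, q i ≠ s) → ∀ k ≤ d + r,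
      G.dist (z k) s = k + G.dist (q d) s := by
    intro s hsA hstail k
    induction k with
    | zero => intro _; rw [hz0]; omega
    | succ k ih =>
      intro hk
      have hsep' : ∀ w : G.Walk (z (k+1)) s, z k ∈ w.support := by
        intro w
        have := hzsep s hsA hstail (k+1) (by omega) hk w
        rwa [show k + 1 - 1 = k by omega] at this
      have hsplit := sep_dist hG hsep'
      have hadj' : G.Adj (z (k+1)) (z k) := (hzadj k (by omega)).symm
      have h1 : G.dist (z (k+1)) (z k) = 1 := SimpleGraph.dist_eq_one_iff_adj.mpr hadj'
      rw [hsplit, h1, ih (by omega)]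
      omega
  exact ⟨z, hz0, hzq, hznot, hzadj, hzdist, hzsep_iter⟩

end Branch

section Contra
variable {V : Type*} [Fintype V] [DecidableEq V] {G : SimpleGraph V} [DecidableRel G.Adj]

/-- main contradiction: two distinct leaf chains with common end, both avoided by anchors
of `S`, contradict `S` being a `2r`-relaxed resolving set. -/
lemma branches_contra (hG : G.Connected) {r : ℕ} (hne : (stemSet G r).Nonempty)
    {d1 d2 : ℕ} {q1 q2 : ℕ → V}
    (h1 : IsChainIn G (stemSet G r) d1 q1) (hd1 : 1 ≤ d1)
    (h2 : IsChainIn G (stemSet G r) d2 q2) (hd2 : 1 ≤ d2)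
    (h2e : 3 ≤ degIn G (stemSet G r) (q2 d2))
    (hv : q1 d1 = q2 d2) (huu : q1 0 ≠ q2 0)
    (α : V → V) (hαmem : ∀ x, α x ∈ stemSet G r)
    (hαsep : ∀ x, ∀ s ∈ stemSet G r, ∀ w : G.Walk x s, α x ∈ w.support)
    (S : Finset V) (hS : IsRelaxedResolving G (2*r) ↑S)
    (hS1 : ∀ s ∈ S, ∀ i < d1, q1 i ≠ α s)
    (hS2 : ∀ s ∈ S, ∀ i < d2, q2 i ≠ α s) : False := by
  set A := stemSet G r with hA
  set v := q1 d1 with hvdef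
  -- tails are disjoint
  have htd : ∀ i, i < d1 → ∀ j, j < d2 → q1 i ≠ q2 j := by
    intro i hi j hj hEq
    exact huu (chain_share h1 h2 h2e i j hi hj hEq)
  obtain ⟨hmem1, hadj1, hinj1, hint1, hleaf1⟩ := h1
  obtain ⟨hmem2, hadj2, hinj2, hint2, hleaf2⟩ := h2
  obtain ⟨z1, hz10, hz1q, hz1not, hz1adj, hz1dist, hz1sep⟩ :=
    branch_package hG hne ⟨hmem1, hadj1, hinj1, hint1, hleaf1⟩ hd1
  obtain ⟨z2, hz20, hz2q, hz2not, hz2adj, hz2dist, hz2sep⟩ :=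
    branch_package hG hne ⟨hmem2, hadj2, hinj2, hint2, hleaf2⟩ hd2
  have hz20v : z2 0 = v := by rw [hz20, ← hv]
  set x1 := z1 (r+1) with hx1
  set x2 := z2 (r+1) with hx2
  have hr1d1 : r + 1 ≤ d1 + r := by omega
  have hr1d2 : r + 1 ≤ d2 + r := by omega
  have hvA : v ∈ A := hmem1 d1 le_rfl
  have hvtail1 : ∀ i < d1, q1 i ≠ v := by
    intro i hi hEq
    have := hinj1 i d1 (by omega) le_rfl hEq
    omega
  have hvtail2 : ∀ i < d2, q2 i ≠ v := by
    intro i hi hEq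
    have h2 : q2 i = q2 d2 := hEq.trans hv
    have := hinj2 i d2 (by omega) le_rfl h2
    omega
  have hq2dv : q2 d2 = v := hv.symm
  -- distances from v
  have hdvx1 : G.dist x1 v = r + 1 := by
    have := hz1dist v hvA hvtail1 (r+1) hr1d1
    rwa [← hvdef, SimpleGraph.dist_self, Nat.add_zero] at this
  have hdvx2 : G.dist x2 v = r + 1 := by
    have := hz2dist v hvA hvtail2 (r+1) hr1d2
    rwa [hq2dv, SimpleGraph.dist_self, Nat.add_zero] at this
  -- z1 1 facts
  have hz11A : z1 1 ∈ A := by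
    rw [hz1q 1 hd1]; exact hmem1 (d1 - 1) (by omega)
  have hz11q : z1 1 = q1 (d1 - 1) := hz1q 1 hd1
  -- distance from z1 1 to v is 1... and x1 is far from z1 1
  have hdz11v : G.dist (z1 1) v = 1 := by
    have := hz1dist v hvA hvtail1 1 (by omega)
    rwa [← hvdef, SimpleGraph.dist_self, Nat.add_zero] at this
  have hdx1z11 : r ≤ G.dist x1 (z1 1) := by
    have htri : G.dist x1 v ≤ G.dist x1 (z1 1) + G.dist (z1 1) v := hG.dist_triangle
    omega
  -- generic distance formula for anchored vertices
  have hdistx1 : ∀ s : V, (∀ i < d1, q1 i ≠ α s) →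
      G.dist s x1 = G.dist s (α s) + G.dist (α s) v + (r + 1) := by
    intro s hαtail
    have hαA := hαmem s
    have hαdist : G.dist x1 (α s) = (r+1) + G.dist v (α s) := by
      have := hz1dist (α s) hαA hαtail (r+1) hr1d1
      rwa [← hvdef] at this
    have hle : G.dist s x1 ≤ G.dist s (α s) + G.dist (α s) v + (r + 1) := by
      have t1 : G.dist s x1 ≤ G.dist s (α s) + G.dist (α s) x1 := hG.dist_triangle
      have c1 : G.dist (α s) x1 = G.dist x1 (α s) := SimpleGraph.dist_comm
      have c2 : G.dist v (α s) = G.dist (α s) v := SimpleGraph.dist_comm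
      omega
    have hge : G.dist s (α s) + G.dist (α s) v + (r + 1) ≤ G.dist s x1 := by
      -- shortest walk from x1 to s must pass z1 1
      obtain ⟨w, hw⟩ := (hG x1 s).exists_walk_length_eq_dist
      obtain ⟨p0, hp0⟩ : ∃ p : G.Walk s (α s), p.IsPath :=
        ⟨((hG s (α s)).some).bypass, SimpleGraph.Walk.bypass_isPath _⟩
      have hmemW : z1 1 ∈ (w.append p0).support :=
        hz1sep (α s) hαA hαtail (r+1) hr1d1 1 (by omega) (w.append p0)
      rw [SimpleGraph.Walk.mem_support_append_iff] at hmemW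
      have hz11w : z1 1 ∈ w.support := by
        rcases hmemW with h | h
        · exact h
        · exfalso
          -- z1 1 on a path from s to α s : contradiction with nodup
          have hαin : α s ∈ (p0.takeUntil (z1 1) h).support :=
            hαsep s (z1 1) hz11A (p0.takeUntil (z1 1) h)
          have hαne : α s ≠ z1 1 := by
            intro hEq
            exact hαtail (d1 - 1) (by omega) (by rw [← hz11q, hEq])
          have hαtailmem : α s ∈ (p0.dropUntil (z1 1) h).support.tail := by
            have hend : α s ∈ (p0.dropUntil (z1 1) h).support :=
              SimpleGraph.Walk.end_mem_support _
            rw [SimpleGraph.Walk.mem_support_iff] at hend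
            rcases hend with hEq | h'
            · exact absurd hEq hαne
            · exact h'
          have hnd : ((p0.takeUntil (z1 1) h).support ++
              (p0.dropUntil (z1 1) h).support.tail).Nodup := by
            rw [← SimpleGraph.Walk.support_append, SimpleGraph.Walk.take_spec]
            exact hp0.support_nodup
          rw [List.nodup_append] at hnd
          exact hnd.2.2 _ hαin _ hαtailmem rfl
      have hsplit := dist_add_dist_le_length w hz11w
      rw [hw] at hsplit
      -- dist (z1 1) s = dist s (α s) + dist (α s) (z1 1)
      have hsz11 : G.dist s (z1 1) = G.dist s (α s) + G.dist (α s) (z1 1) :=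
        sep_dist hG (fun w' => hαsep s (z1 1) hz11A w')
      have hαz11 : G.dist (z1 1) (α s) = 1 + G.dist v (α s) := by
        have := hz1dist (α s) hαA hαtail 1 (by omega)
        rwa [← hvdef] at this
      have c1 : G.dist (z1 1) s = G.dist s (z1 1) := SimpleGraph.dist_comm
      have c2 : G.dist (α s) (z1 1) = G.dist (z1 1) (α s) := SimpleGraph.dist_comm
      have c3 : G.dist v (α s) = G.dist (α s) v := SimpleGraph.dist_comm
      have c4 : G.dist x1 s = G.dist s x1 := SimpleGraph.dist_comm
      omega
    omega
  have hdistx2 : ∀ s : V, (∀ i < d2, q2 i ≠ α s) →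
      G.dist s x2 = G.dist s (α s) + G.dist (α s) v + (r + 1) := by
    intro s hαtail
    have hαA := hαmem s
    have hαdist : G.dist x2 (α s) = (r+1) + G.dist v (α s) := by
      have := hz2dist (α s) hαA hαtail (r+1) hr1d2
      rwa [hq2dv] at this
    have hle : G.dist s x2 ≤ G.dist s (α s) + G.dist (α s) v + (r + 1) := by
      have t1 : G.dist s x2 ≤ G.dist s (α s) + G.dist (α s) x2 := hG.dist_triangle
      have c1 : G.dist (α s) x2 = G.dist x2 (α s) := SimpleGraph.dist_comm
      have c2 : G.dist v (α s) = G.dist (α s) v := SimpleGraph.dist_comm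
      omega
    have hz21A : z2 1 ∈ A := by
      rw [hz2q 1 hd2]; exact hmem2 (d2 - 1) (by omega)
    have hz21q : z2 1 = q2 (d2 - 1) := hz2q 1 hd2
    have hge : G.dist s (α s) + G.dist (α s) v + (r + 1) ≤ G.dist s x2 := by
      obtain ⟨w, hw⟩ := (hG x2 s).exists_walk_length_eq_dist
      obtain ⟨p0, hp0⟩ : ∃ p : G.Walk s (α s), p.IsPath :=
        ⟨((hG s (α s)).some).bypass, SimpleGraph.Walk.bypass_isPath _⟩
      have hmemW : z2 1 ∈ (w.append p0).support :=
        hz2sep (α s) hαA hαtail (r+1) hr1d2 1 (by omega) (w.append p0)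
      rw [SimpleGraph.Walk.mem_support_append_iff] at hmemW
      have hz21w : z2 1 ∈ w.support := by
        rcases hmemW with h | h
        · exact h
        · exfalso
          have hαin : α s ∈ (p0.takeUntil (z2 1) h).support :=
            hαsep s (z2 1) hz21A (p0.takeUntil (z2 1) h)
          have hαne : α s ≠ z2 1 := by
            intro hEq
            exact hαtail (d2 - 1) (by omega) (by rw [← hz21q, hEq])
          have hαtailmem : α s ∈ (p0.dropUntil (z2 1) h).support.tail := by
            have hend : α s ∈ (p0.dropUntil (z2 1) h).support :=
              SimpleGraph.Walk.end_mem_support _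
            rw [SimpleGraph.Walk.mem_support_iff] at hend
            rcases hend with hEq | h'
            · exact absurd hEq hαne
            · exact h'
          have hnd : ((p0.takeUntil (z2 1) h).support ++
              (p0.dropUntil (z2 1) h).support.tail).Nodup := by
            rw [← SimpleGraph.Walk.support_append, SimpleGraph.Walk.take_spec]
            exact hp0.support_nodup
          rw [List.nodup_append] at hnd
          exact hnd.2.2 _ hαin _ hαtailmem rfl
      have hsplit := dist_add_dist_le_length w hz21w
      rw [hw] at hsplit
      have hsz21 : G.dist s (z2 1) = G.dist s (α s) + G.dist (α s) (z2 1) :=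
        sep_dist hG (fun w' => hαsep s (z2 1) hz21A w')
      have hαz21 : G.dist (z2 1) (α s) = 1 + G.dist v (α s) := by
        have := hz2dist (α s) hαA hαtail 1 (by omega)
        rwa [hq2dv] at this
      have hdz21v : G.dist (z2 1) v = 1 := by
        have := hz2dist v hvA hvtail2 1 (by omega)
        rwa [hq2dv, SimpleGraph.dist_self, Nat.add_zero] at this
      have hdx2z21 : r ≤ G.dist x2 (z2 1) := by
        have htri : G.dist x2 v ≤ G.dist x2 (z2 1) + G.dist (z2 1) v := hG.dist_triangle
        omega
      have c1 : G.dist (z2 1) s = G.dist s (z2 1) := SimpleGraph.dist_comm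
      have c2 : G.dist (α s) (z2 1) = G.dist (z2 1) (α s) := SimpleGraph.dist_comm
      have c3 : G.dist v (α s) = G.dist (α s) v := SimpleGraph.dist_comm
      have c4 : G.dist x2 s = G.dist s x2 := SimpleGraph.dist_comm
      omega
    omega
  -- identification vectors coincide
  have hvec : ∀ s ∈ (↑S : Set V), G.dist x1 s = G.dist x2 s := by
    intro s hs
    have hsS : s ∈ S := hs
    have e1 := hdistx1 s (fun i hi => hS1 s hsS i hi)
    have e2 := hdistx2 s (fun i hi => hS2 s hsS i hi)
    have c1 : G.dist x1 s = G.dist s x1 := SimpleGraph.dist_comm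
    have c2 : G.dist x2 s = G.dist s x2 := SimpleGraph.dist_comm
    omega
  have hclose : G.dist x1 x2 ≤ 2 * r := hS x1 x2 hvec
  -- but x1 and x2 are far apart
  obtain ⟨w, hw⟩ := (hG x1 x2).exists_walk_length_eq_dist
  obtain ⟨wc, hwclen, hwcmem, _⟩ := exists_chain_walk
    (q := z2) (d := r+1) (fun i hi => hz2adj i (by omega))
  have hmemW : z1 1 ∈ (w.append wc.reverse).support := by
    have hvA' : v ∈ A := hvA
    have := hz1sep v hvA hvtail1 (r+1) hr1d1 1 (by omega)
      ((w.append wc.reverse).copy rfl hz20v)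
    rwa [SimpleGraph.Walk.support_copy] at this
  rw [SimpleGraph.Walk.mem_support_append_iff] at hmemW
  have hz11w : z1 1 ∈ w.support := by
    rcases hmemW with h | h
    · exact h
    · exfalso
      rw [SimpleGraph.Walk.support_reverse, List.mem_reverse] at h
      obtain ⟨i, hi, hEq⟩ := (hwcmem (z1 1)).1 h
      rcases Nat.lt_or_ge d2 i with h' | h'
      · exact hz2not i h' (by omega) (hEq ▸ hz11A)
      · rcases Nat.eq_zero_or_pos i with rfl | hipos
        · rw [hz20] at hEq
          exact hvtail1 (d1 - 1) (by omega) (by rw [← hz11q, ← hEq, hq2dv])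
        · have := hz2q i h'
          rw [this] at hEq
          exact htd (d1 - 1) (by omega) (d2 - i) (by omega) (by rw [← hz11q, ← hEq])
  have hsplit := dist_add_dist_le_length w hz11w
  rw [hw] at hsplit
  have hfar : G.dist x2 (z1 1) = (r + 1) + G.dist v (z1 1) := by
    have hz11tail2 : ∀ i < d2, q2 i ≠ z1 1 := by
      intro i hi hEq
      exact htd (d1 - 1) (by omega) i hi (by rw [← hz11q, hEq])
    have := hz2dist (z1 1) hz11A hz11tail2 (r+1) hr1d2
    rwa [hq2dv] at this
  have c1 : G.dist (z1 1) x2 = G.dist x2 (z1 1) := SimpleGraph.dist_comm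
  omega

end Contra

section Count
variable {V : Type*} [Fintype V] [DecidableEq V] {G : SimpleGraph V} [DecidableRel G.Adj]

theorem key_count (hG : G.Connected) (r : ℕ) (hnp : ¬ IsPathGraphOn G (stemSet G r))
    (S : Finset V) (hS : IsRelaxedResolving G (2*r) ↑S) :
    sigmaIn G (stemSet G r) ≤ exIn G (stemSet G r) + S.card := by
  classical
  set A := stemSet G r with hA
  -- A is nonempty, else the stem would be a (trivial) path graph
  have hAne : A.Nonempty := by
    rcases Finset.eq_empty_or_nonempty A with hA0 | h
    · exfalso
      apply hnp
      refine ⟨0, ⟨?_⟩⟩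
      haveI : IsEmpty ((↑(A : Finset V) : Set V) : Type _) :=
        ⟨fun x => by
          have hx : ∃ z, z ∈ A := ⟨(x : V), by exact_mod_cast x.2⟩
          rw [hA0] at hx
          simp at hx⟩
      exact { toEquiv := Equiv.equivOfIsEmpty _ _
              map_rel_iff' := fun {a} => isEmptyElim a }
    · exact h
  -- anchor function
  have hanch := anchor_exists hG r hAne
  choose α hα using hanch
  have hαmem : ∀ x, α x ∈ A := fun x => (hα x).1
  have hαsep : ∀ x, ∀ s ∈ A, ∀ w : G.Walk x s, α x ∈ w.support := fun x => (hα x).2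
  have hαfix : ∀ s ∈ A, α s = s := by
    intro s hs
    have := hαsep s s hs SimpleGraph.Walk.nil
    simpa [SimpleGraph.Walk.support_nil] using this
  -- chains for each leaf
  have hch : ∀ u ∈ leavesIn G A, ∃ (dd : ℕ) (qq : ℕ → V), qq 0 = u ∧ IsChainIn G A dd qq ∧
      1 ≤ dd ∧ 3 ≤ degIn G A (qq dd) := by
    intro u hu
    rw [leavesIn, Finset.mem_filter] at hu
    exact exists_leafChain hG hnp hu.1 hu.2
  choose! d q hq0 hchain hd1 hdeg3 using hch
  set L := leavesIn G A with hL
  set tail : V → Finset V := fun u => (Finset.range (d u)).image (q u) with htail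
  have htailmem : ∀ u zz, zz ∈ tail u ↔ ∃ i < d u, q u i = zz := by
    intro u zz
    simp [htail, Finset.mem_image, Finset.mem_range]
  -- each q u (d u) is an exterior major vertex
  have hmajE : ∀ u ∈ L, IsExtMajorIn G A (q u (d u)) := by
    intro u hu
    obtain ⟨hmem, hadj, hinj, hint, hleaf⟩ := hchain u hu
    refine ⟨hmem (d u) le_rfl, hdeg3 u hu, u, ?_⟩
    obtain ⟨w, hwlen, hwmem, hwnd⟩ := exists_chain_walk (q := q u) (d := d u) hadj
    refine ⟨(w.reverse).copy rfl (hq0 u hu), ?_, ?_, ?_, ?_, ?_⟩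
    · rw [SimpleGraph.Walk.isPath_def, SimpleGraph.Walk.support_copy,
        SimpleGraph.Walk.support_reverse]
      exact List.nodup_reverse.mpr (hwnd hinj)
    · rw [SimpleGraph.Walk.length_copy, SimpleGraph.Walk.length_reverse, hwlen]
      exact hd1 u hu
    · intro z hz
      rw [SimpleGraph.Walk.support_copy, SimpleGraph.Walk.support_reverse,
        List.mem_reverse] at hz
      obtain ⟨i, hi, rfl⟩ := (hwmem z).1 hz
      exact hmem i hi
    · have := hleaf
      rwa [hq0 u hu] at this
    · intro z hz hzv hzu
      rw [SimpleGraph.Walk.support_copy, SimpleGraph.Walk.support_reverse,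
        List.mem_reverse] at hz
      obtain ⟨i, hi, rfl⟩ := (hwmem z).1 hz
      have hi0 : i ≠ 0 := by
        intro h0
        exact hzu (by rw [h0]; exact hq0 u hu)
      have hid : i ≠ d u := fun h0 => hzv (by rw [h0])
      exact hint i (by omega) (by omega)
  -- tails of distinct leaves are disjoint
  have hshare : ∀ u ∈ L, ∀ u' ∈ L, ∀ zz, zz ∈ tail u → zz ∈ tail u' → u = u' := by
    intro u hu u' hu' zz h1 h2
    obtain ⟨i, hi, hEq1⟩ := (htailmem u zz).1 h1
    obtain ⟨j, hj, hEq2⟩ := (htailmem u' zz).1 h2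
    have := chain_share (hchain u hu) (hchain u' hu') (hdeg3 u' hu') i j hi hj
      (hEq1.trans hEq2.symm)
    rw [hq0 u hu, hq0 u' hu'] at this
    exact this
  -- tail vertices have degree ≤ 2
  have htaildeg : ∀ u ∈ L, ∀ zz ∈ tail u, degIn G A zz ≤ 2 := by
    intro u hu zz hzz
    obtain ⟨i, hi, rfl⟩ := (htailmem u zz).1 hzz
    obtain ⟨hmem, hadj, hinj, hint, hleaf⟩ := hchain u hu
    rcases Nat.eq_zero_or_pos i with rfl | hipos
    · omega
    · exact le_of_eq (hint i hipos hi)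
  -- the injection
  set Efin : Finset V := (Set.toFinite {v | IsExtMajorIn G A v}).toFinset with hEfin
  set f : V → V := fun u =>
    if h : (S.filter (fun s => α s ∈ tail u)).Nonempty then h.choose else q u (d u) with hf
  have hmapsto : ∀ u ∈ L, f u ∈ S ∪ Efin := by
    intro u hu
    rw [hf]
    by_cases h : (S.filter (fun s => α s ∈ tail u)).Nonempty
    · simp only [dif_pos h]
      have := h.choose_spec
      rw [Finset.mem_filter] at this
      exact Finset.mem_union_left _ this.1
    · simp only [dif_neg h]
      apply Finset.mem_union_right
      rw [hEfin, Set.Finite.mem_toFinset]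
      exact hmajE u hu
  have hinjon : ∀ u ∈ L, ∀ u' ∈ L, f u = f u' → u = u' := by
    intro u hu u' hu' hEq
    by_contra hne
    rw [hf] at hEq
    by_cases h : (S.filter (fun s => α s ∈ tail u)).Nonempty <;>
      by_cases h' : (S.filter (fun s => α s ∈ tail u')).Nonempty
    · simp only [dif_pos h, dif_pos h'] at hEq
      have hs := h.choose_spec
      have hs' := h'.choose_spec
      rw [Finset.mem_filter] at hs hs'
      rw [hEq] at hs
      exact hne (hshare u hu u' hu' (α h'.choose) hs.2 hs'.2)
    · -- f u ∈ S is q u' (d u'), a major vertex: contradiction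
      simp only [dif_pos h, dif_neg h'] at hEq
      have hs := h.choose_spec
      rw [Finset.mem_filter] at hs
      have hmajA : q u' (d u') ∈ A := by
        obtain ⟨hmem, _, _, _, _⟩ := hchain u' hu'
        exact hmem (d u') le_rfl
      have : α h.choose = q u' (d u') := by rw [hEq]; exact hαfix (q u' (d u')) hmajA
      have htl : q u' (d u') ∈ tail u := this ▸ hs.2
      have := htaildeg u hu (q u' (d u')) htl
      have := hdeg3 u' hu'
      omega
    · simp only [dif_neg h, dif_pos h'] at hEq
      have hs' := h'.choose_spec
      rw [Finset.mem_filter] at hs'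
      have hmajA : q u (d u) ∈ A := by
        obtain ⟨hmem, _, _, _, _⟩ := hchain u hu
        exact hmem (d u) le_rfl
      have : α h'.choose = q u (d u) := by rw [← hEq]; exact hαfix (q u (d u)) hmajA
      have htl : q u (d u) ∈ tail u' := this ▸ hs'.2
      have := htaildeg u' hu' (q u (d u)) htl
      have := hdeg3 u hu
      omega
    · -- both branches avoided by S : the main contradiction
      simp only [dif_neg h, dif_neg h'] at hEq
      have hS1 : ∀ s ∈ S, ∀ i < d u, q u i ≠ α s := by
        intro s hsS i hi hEq2
        exact h ⟨s, Finset.mem_filter.mpr ⟨hsS, (htailmem u (α s)).2 ⟨i, hi, hEq2⟩⟩⟩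
      have hS2 : ∀ s ∈ S, ∀ i < d u', q u' i ≠ α s := by
        intro s hsS i hi hEq2
        exact h' ⟨s, Finset.mem_filter.mpr ⟨hsS, (htailmem u' (α s)).2 ⟨i, hi, hEq2⟩⟩⟩
      have huu : q u 0 ≠ q u' 0 := by
        rw [hq0 u hu, hq0 u' hu']
        exact hne
      exact branches_contra hG hAne (hchain u hu) (hd1 u hu) (hchain u' hu')
        (hd1 u' hu') (hdeg3 u' hu') hEq huu α hαmem hαsep S hS hS1 hS2
  have hcard : L.card ≤ (S ∪ Efin).card :=
    Finset.card_le_card_of_injOn f hmapsto hinjon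
  have hcard2 : (S ∪ Efin).card ≤ S.card + Efin.card := Finset.card_union_le _ _
  have hex : exIn G A = Efin.card := by
    rw [exIn, hEfin, Set.ncard_eq_toFinset_card]
  rw [sigmaIn, ← hL]
  omega

theorem stmt4_aux {V : Type*} [Fintype V] [DecidableEq V] (G : SimpleGraph V)
    [DecidableRel G.Adj] (hG : G.Connected) (r : ℕ)
    (hnp : ¬ IsPathGraphOn G (stemSet G r)) :
    sigmaIn G (stemSet G r) - exIn G (stemSet G r) ≤ MDk G (2 * r) := by
  have huniv : IsRelaxedResolving G (2*r) ↑(Finset.univ : Finset V) := by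
    intro u v h
    have h1 := h u (by simp)
    rw [SimpleGraph.dist_self] at h1
    have : v = u := hG.dist_eq_zero_iff.mp h1.symm
    subst this
    simp [SimpleGraph.dist_self]
  have hne : {n | ∃ S : Finset V, IsRelaxedResolving G (2*r) ↑S ∧ S.card = n}.Nonempty :=
    ⟨(Finset.univ : Finset V).card, Finset.univ, huniv, rfl⟩
  have hmem := Nat.sInf_mem hne
  obtain ⟨S, hS, hcard⟩ := hmem
  have := key_count hG r hnp S hS
  rw [MDk]
  omega

end Count

/-- For a finite connected graph `G` such that `Stem_r(G)` is not a path
graph, `MD_{2r}(G) ≥ σ_r(G) - ex_r(G)`. -/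
theorem stmt_4 {V : Type*} [Fintype V] [DecidableEq V] (G : SimpleGraph V)
    [DecidableRel G.Adj] (hG : G.Connected) (r : ℕ)
    (hnp : ¬ IsPathGraphOn G (stemSet G r)) :
    sigmaIn G (stemSet G r) - exIn G (stemSet G r) ≤ MDk G (2 * r) := by
  exact stmt4_aux G hG r hnp
end

section
/- Let T' be a finite tree containing a subtree T that is not a path graph, let m = MD(T), and let r be a nonnegative integer. If every vertex of T' not in T is at distance at most r from some vertex of T, then T' admits a 2r-relaxed resolving set of size m. -/
open SimpleGraph

namespace Stmt5Aux

variable {V : Type*} [DecidableEq V] {G : SimpleGraph V}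

/-- In a tree, every path between two vertices has length equal to the distance. -/
lemma tree_path_length (ht : G.IsTree) {u v : V} {p : G.Walk u v} (hp : p.IsPath) :
    p.length = G.dist u v := by
  obtain ⟨q, hq, hql⟩ := ht.isConnected.exists_path_of_dist u v
  have h : (⟨p, hp⟩ : G.Path u v) = ⟨q, hq⟩ := ht.IsAcyclic.path_unique _ _
  rw [← hql]
  exact congrArg Walk.length (congrArg Subtype.val h)

lemma append_isPath {u x s : V} {p : G.Walk u x} {q : G.Walk x s}
    (hp : p.IsPath) (hq : q.IsPath)
    (h : ∀ w ∈ p.support, w ∈ q.support → w = x) : (p.append q).IsPath := by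
  rw [Walk.isPath_def, Walk.support_append]
  have hqn : q.support.Nodup := hq.support_nodup
  have hcons : q.support = x :: q.support.tail := q.support_eq_cons
  have hxnot : x ∉ q.support.tail := by
    rw [hcons] at hqn
    exact (List.nodup_cons.mp hqn).1
  refine List.Nodup.append hp.support_nodup ?_ ?_
  · rw [hcons] at hqn
    exact (List.nodup_cons.mp hqn).2
  · intro w hw hw'
    have hwq : w ∈ q.support := by rw [hcons]; exact List.mem_cons_of_mem _ hw'
    have : w = x := h w hw hwq
    subst this
    exact hxnot hw'

/-- Lift a walk whose support lies in `A` to the induced graph. -/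
lemma walk_in_induce {A : Set V} {u v : V} (p : G.Walk u v) (h : ∀ w ∈ p.support, w ∈ A) :
    ∃ q : (G.induce A).Walk ⟨u, h u p.start_mem_support⟩ ⟨v, h v p.end_mem_support⟩,
      q.length = p.length := by
  induction p with
  | nil => exact ⟨.nil, rfl⟩
  | @cons a b c hadj p ih =>
    have hw : ∀ x ∈ p.support, x ∈ A := fun x hx =>
      h x (by rw [Walk.support_cons]; exact List.mem_cons_of_mem _ hx)
    obtain ⟨q, hq⟩ := ih hw
    exact ⟨.cons (by exact hadj) q, by exact congrArg (· + 1) hq⟩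

/-- A connected induced subgraph of a tree contains a geodesic between any two of its
vertices. -/
lemma convex_geodesic (ht : G.IsTree) {A : Set V} (hA : (G.induce A).Connected)
    {a b : V} (ha : a ∈ A) (hb : b ∈ A) :
    ∃ p : G.Walk a b, p.IsPath ∧ p.length = G.dist a b ∧ ∀ w ∈ p.support, w ∈ A := by
  obtain ⟨q⟩ := hA ⟨a, ha⟩ ⟨b, hb⟩
  let q' : G.Walk a b := q.map (SimpleGraph.Embedding.induce A).toHom
  refine ⟨q'.bypass, q'.bypass_isPath, tree_path_length ht q'.bypass_isPath, ?_⟩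
  intro w hw
  have hmem := q'.support_bypass_subset hw
  simp only [q'] at hmem
  replace hmem : w ∈ q.support.map (SimpleGraph.Embedding.induce (G := G) A).toHom := by
    rw [← Walk.support_map]; exact hmem
  obtain ⟨z, hz, rfl⟩ := List.mem_map.mp hmem
  exact z.2

/-- Distances in a connected induced subgraph of a tree agree with distances in the tree. -/
lemma dist_induce (ht : G.IsTree) {A : Set V} (hA : (G.induce A).Connected)
    (a b : ↥A) : (G.induce A).dist a b = G.dist ↑a ↑b := by
  apply le_antisymm
  · obtain ⟨p, hp, hlen, hsup⟩ := convex_geodesic ht hA a.2 b.2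
    obtain ⟨q, hq⟩ := walk_in_induce p hsup
    have h2 := SimpleGraph.dist_le q
    simp only [Subtype.coe_eta] at h2
    omega
  · have := SimpleGraph.dist_le
      ((hA.exists_path_of_dist a b).choose.map (SimpleGraph.Embedding.induce A).toHom)
    rw [Walk.length_map] at this
    exact le_trans this (le_of_eq (hA.exists_path_of_dist a b).choose_spec.2)

lemma firstHit {A : Set V} :
    ∀ {u a : V} (_ : G.Walk u a) (_ : a ∈ A), ∃ x ∈ A, ∃ q : G.Walk u x, q.IsPath ∧
      ∀ w ∈ q.support, w ∈ A → w = x := by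
  intro u a p
  induction p with
  | nil => exact fun ha => ⟨_, ha, Walk.nil, Walk.IsPath.nil, fun w hw _ => by simpa using hw⟩
  | @cons u b c hadj p ih =>
    intro ha
    by_cases hu : u ∈ A
    · exact ⟨u, hu, Walk.nil, Walk.IsPath.nil, fun w hw _ => by simpa using hw⟩
    · obtain ⟨x, hx, q, hqp, hqA⟩ := ih ha
      refine ⟨x, hx, (Walk.cons hadj q).bypass, Walk.bypass_isPath _, fun w hw hwA => ?_⟩
      have hmem := Walk.support_bypass_subset _ hw
      rw [Walk.support_cons] at hmem
      rcases List.mem_cons.mp hmem with rfl | h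
      · exact absurd hwA hu
      · exact hqA w h hwA

/-- Gate property: any vertex of a tree has a gate into a connected induced subgraph. -/
lemma gate (ht : G.IsTree) {A : Set V} (hA : (G.induce A).Connected) (u : V) :
    ∃ x ∈ A, ∀ s ∈ A, G.dist u s = G.dist u x + G.dist x s := by
  obtain ⟨⟨a, ha⟩⟩ := hA.nonempty
  obtain ⟨p0⟩ := ht.isConnected u a
  obtain ⟨x, hx, q, hqp, hqA⟩ := firstHit p0 ha
  refine ⟨x, hx, fun s hs => ?_⟩
  obtain ⟨g, hgp, hglen, hgA⟩ := convex_geodesic ht hA hx hs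
  have hpath : (q.append g).IsPath :=
    append_isPath hqp hgp (fun w hw hw' => hqA w hw (hgA w hw'))
  have h1 := tree_path_length ht hpath
  rw [Walk.length_append] at h1
  have h2 := tree_path_length ht hqp
  omega

lemma path_split (ht : G.IsTree) {x y : V} {p : G.Walk x y} (hp : p.IsPath)
    {w : V} (hw : w ∈ p.support) :
    G.dist x w + G.dist w y = p.length := by
  have h1 := tree_path_length ht (hp.takeUntil hw)
  have h2 := tree_path_length ht (hp.dropUntil hw)
  have h3 : (p.takeUntil w hw).length + (p.dropUntil w hw).length = p.length := by
    rw [← Walk.length_append, Walk.take_spec]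
  omega

lemma eq_of_dist_eq_on_path (ht : G.IsTree) {x y : V} {p : G.Walk x y} (hp : p.IsPath)
    {w w' : V} (hw : w ∈ p.support) (hw' : w' ∈ p.support)
    (h : G.dist x w = G.dist x w') : w = w' := by
  have hc := ht.isConnected
  have hw'' : w' ∈ (p.takeUntil w hw).support ∨ w' ∈ (p.dropUntil w hw).support := by
    rw [← Walk.mem_support_append_iff, Walk.take_spec]
    exact hw'
  rcases hw'' with h3 | h3
  · have h4 := path_split ht (hp.takeUntil hw) h3
    have h5 := tree_path_length ht (hp.takeUntil hw)
    have h6 : G.dist w' w = 0 := by omega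
    exact ((hc.dist_eq_zero_iff).mp h6).symm
  · have h4 := path_split ht (hp.dropUntil hw) h3
    have h5 := tree_path_length ht (hp.dropUntil hw)
    have h6 := path_split ht hp hw
    have h7 := path_split ht hp hw'
    have h8 : G.dist w w' = 0 := by omega
    exact (hc.dist_eq_zero_iff).mp h8

lemma dist_getVert_le (hc : G.Connected) {x y : V} (p : G.Walk x y) (t : ℕ) :
    G.dist x (p.getVert t) ≤ t := by
  induction t with
  | zero => simp [p.getVert_zero]
  | succ n ih =>
    by_cases h : n < p.length
    · have hadj := p.adj_getVert_succ h
      have h1 : G.dist (p.getVert n) (p.getVert (n + 1)) = 1 :=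
        (SimpleGraph.dist_eq_one_iff_adj).mpr hadj
      have h2 := hc.dist_triangle (u := x) (v := p.getVert n) (w := p.getVert (n + 1))
      omega
    · rw [p.getVert_of_length_le (by omega)]
      rw [p.getVert_of_length_le (by omega)] at ih
      omega

/-- On a geodesic, the `t`-th vertex is at distance `t` from the start and `length - t`
from the end. -/
lemma dist_getVert (ht : G.IsTree) {x y : V} {p : G.Walk x y}
    (hlen : p.length = G.dist x y) {t : ℕ} (hT : t ≤ p.length) :
    G.dist x (p.getVert t) = t ∧ G.dist (p.getVert t) y + t = p.length := by
  have hc := ht.isConnected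
  have h1 := dist_getVert_le hc p t
  have h2 := dist_getVert_le hc p.reverse (p.length - t)
  rw [Walk.getVert_reverse] at h2
  have he : p.length - (p.length - t) = t := by omega
  rw [he] at h2
  have h3 := hc.dist_triangle (u := x) (v := p.getVert t) (w := y)
  have h4 : G.dist y (p.getVert t) = G.dist (p.getVert t) y := SimpleGraph.dist_comm ..
  omega

end Stmt5Aux


/-- If a finite tree `T'` contains a subtree `T` (a connected subgraph,
here given by its vertex set `A`) that is not a path graph, and every vertex of `T'`
outside `T` is at distance at most `r` from some vertex of `T`, then `T'` admits a
`2r`-relaxed resolving set of size `m = MD(T)`. -/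
theorem stmt_5 {V : Type*} [Fintype V] [DecidableEq V] (T' : SimpleGraph V)
    [DecidableRel T'.Adj] (hT' : T'.IsTree) (A : Finset V)
    (hsub : (T'.induce ((A : Finset V) : Set V)).Connected)
    (hnp : ¬ IsPathGraphOn T' A) (r : ℕ)
    (hr : ∀ v : V, v ∉ A → ∃ w ∈ A, T'.dist v w ≤ r) :
    ∃ S : Finset V, IsRelaxedResolving T' (2 * r) ↑S ∧
      S.card = MDk (T'.induce ((A : Finset V) : Set V)) 0 := by
  classical
  open Stmt5Aux in
  set Aset : Set V := ((A : Finset V) : Set V) with hAset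
  have hTc : T'.Connected := hT'.isConnected
  -- the defining set of MDk is nonempty
  have hwit : IsRelaxedResolving (T'.induce Aset) 0 ↑(Finset.univ : Finset ↥Aset) := by
    intro a b h
    have h0 := h a (by simp)
    rw [SimpleGraph.dist_self] at h0
    have hba : b = a := (hsub.dist_eq_zero_iff).mp h0.symm
    subst hba
    simp [SimpleGraph.dist_self]
  have hmem : MDk (T'.induce Aset) 0 ∈
      {n | ∃ S : Finset ↥Aset, IsRelaxedResolving (T'.induce Aset) 0 ↑S ∧ S.card = n} :=
    Nat.sInf_mem ⟨_, Finset.univ, hwit, rfl⟩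
  obtain ⟨S₀, hres, hcard⟩ := hmem
  refine ⟨S₀.image Subtype.val, ?_, by
    rw [Finset.card_image_of_injective _ Subtype.val_injective]; exact hcard⟩
  intro u v huv
  obtain ⟨x, hx, hxg⟩ := gate hT' hsub u
  obtain ⟨y, hy, hyg⟩ := gate hT' hsub v
  have hdu : T'.dist u x ≤ r := by
    by_cases hu : u ∈ A
    · have h1 := hxg u (by exact hu)
      have h2 : T'.dist x u = T'.dist u x := SimpleGraph.dist_comm ..
      rw [SimpleGraph.dist_self] at h1
      omega
    · obtain ⟨w, hw, hwr⟩ := hr u hu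
      have := hxg w (by exact hw)
      omega
  have hdv : T'.dist v y ≤ r := by
    by_cases hv : v ∈ A
    · have h1 := hyg v (by exact hv)
      have h2 : T'.dist y v = T'.dist v y := SimpleGraph.dist_comm ..
      rw [SimpleGraph.dist_self] at h1
      omega
    · obtain ⟨w, hw, hwr⟩ := hr v hv
      have := hyg w (by exact hw)
      omega
  have hs_eq : ∀ s ∈ S₀, T'.dist u x + T'.dist x ↑s = T'.dist v y + T'.dist y ↑s := by
    intro s hs
    have h1 := hxg ↑s s.2
    have h2 := hyg ↑s s.2
    have h3 : T'.dist u ↑s = T'.dist v ↑s :=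
      huv ↑s (by exact Finset.mem_coe.mpr (Finset.mem_image.mpr ⟨s, hs, rfl⟩))
    omega
  have htri : ∀ a b c : V, T'.dist a c ≤ T'.dist a b + T'.dist b c :=
    fun a b c => hTc.dist_triangle
  have hcomm : ∀ a b : V, T'.dist a b = T'.dist b a := fun a b => SimpleGraph.dist_comm ..
  by_cases hc1 : T'.dist u x + T'.dist x y ≤ T'.dist v y
  · have t1 := htri u x v
    have t2 := htri x y v
    have := hcomm v y
    have := hcomm v x
    omega
  by_cases hc2 : T'.dist v y + T'.dist x y ≤ T'.dist u x
  · have t1 := htri u x v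
    have t2 := htri x y v
    have := hcomm v y
    have := hcomm v x
    omega
  push_neg at hc1 hc2
  exfalso
  -- S₀ is nonempty
  rcases S₀.eq_empty_or_nonempty with hS | ⟨s₀, hs₀⟩
  · have h0 := hres ⟨x, hx⟩ ⟨y, hy⟩ (by simp [hS])
    have hxy : (⟨x, hx⟩ : ↥Aset) = ⟨y, hy⟩ :=
      (hsub.dist_eq_zero_iff).mp (Nat.le_zero.mp h0)
    have hxy' : x = y := congrArg Subtype.val hxy
    rw [hxy', SimpleGraph.dist_self] at hc1 hc2
    omega
  -- the geodesic from x to y, inside A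
  obtain ⟨p, hp, hplen, hpA⟩ := convex_geodesic hT' hsub hx hy
  -- medians
  have hmed : ∀ s : ↥Aset, s ∈ S₀ → ∃ m ∈ p.support,
      T'.dist (s : V) x = T'.dist (s : V) m + T'.dist m x ∧
      T'.dist (s : V) y = T'.dist (s : V) m + T'.dist m y := by
    intro s _
    obtain ⟨m, hm, hgm⟩ := gate hT' p.connected_induce_support (s : V)
    exact ⟨m, hm, hgm x p.start_mem_support, hgm y p.end_mem_support⟩
  -- each median is at the same distance from x
  obtain ⟨z, hzsup, hz1, hz2⟩ := hmed s₀ hs₀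
  have hzsplit := path_split hT' hp hzsup
  have hkey : ∀ s : ↥Aset, s ∈ S₀ →
      T'.dist x (s : V) = T'.dist x z + T'.dist z (s : V) ∧
      T'.dist y (s : V) = T'.dist z y + T'.dist z (s : V) := by
    intro s hs
    obtain ⟨m, hmsup, hm1, hm2⟩ := hmed s hs
    have hmsplit := path_split hT' hp hmsup
    have he := hs_eq s hs
    have he0 := hs_eq s₀ hs₀
    have c1 := hcomm (s : V) x
    have c2 := hcomm (s : V) y
    have c3 := hcomm m x
    have c4 := hcomm (s₀ : V) x
    have c5 := hcomm (s₀ : V) y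
    have c6 := hcomm z x
    have c7 := hcomm (s : V) m
    have c8 := hcomm (s₀ : V) m
    have hdxm : T'.dist x m = T'.dist x z := by omega
    have hmz : m = z := eq_of_dist_eq_on_path hT' hp hmsup hzsup (by omega)
    subst hmz
    constructor <;> omega
  have hxz1 := hkey s₀ hs₀
  set j := T'.dist x z with hjdef
  set L := T'.dist x y with hLdef
  -- 0 < j < L
  have hjL : 0 < j ∧ j < L := by
    have he0 := hs_eq s₀ hs₀
    have h1 := hxz1.1
    have h2 := hxz1.2
    omega
  -- z is getVert j, and its neighbours on the geodesic
  have hgv := dist_getVert hT' (by rw [hplen]) (t := j) (by omega)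
  have hgv1 := dist_getVert hT' (by rw [hplen]) (t := j - 1) (by omega)
  have hgv2 := dist_getVert hT' (by rw [hplen]) (t := j + 1) (by omega)
  have hzgv : p.getVert j = z :=
    eq_of_dist_eq_on_path hT' hp
      (Walk.mem_support_iff_exists_getVert.mpr ⟨j, rfl, by omega⟩) hzsup
      (by rw [hgv.1])
  set z₁ := p.getVert (j - 1) with hz1def
  set z₂ := p.getVert (j + 1) with hz2def
  have hadj1 : T'.Adj z₁ z := by
    have := p.adj_getVert_succ (i := j - 1) (by omega)
    have hje : j - 1 + 1 = j := by omega
    rw [hje, hzgv] at this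
    exact this
  have hadj2 : T'.Adj z z₂ := by
    have := p.adj_getVert_succ (i := j) (by omega)
    rw [hzgv] at this
    exact this
  have hd1 : T'.dist z₁ z = 1 := SimpleGraph.dist_eq_one_iff_adj.mpr hadj1
  have hd2 : T'.dist z z₂ = 1 := SimpleGraph.dist_eq_one_iff_adj.mpr hadj2
  have hz1A : z₁ ∈ Aset := hpA _ (Walk.mem_support_iff_exists_getVert.mpr ⟨j - 1, rfl, by omega⟩)
  have hz2A : z₂ ∈ Aset := hpA _ (Walk.mem_support_iff_exists_getVert.mpr ⟨j + 1, rfl, by omega⟩)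
  -- z₁ ≠ z₂
  have hne : z₁ ≠ z₂ := by
    intro hEq
    have t1 := htri x z₁ z₂
    have e1 : T'.dist x z₁ = j - 1 := hgv1.1
    have e2 : T'.dist x z₂ = j + 1 := hgv2.1
    rw [hEq, SimpleGraph.dist_self] at *
    omega
  -- equal distances to all landmarks
  have heq12 : ∀ s : ↥Aset, s ∈ S₀ → T'.dist z₁ (s : V) = T'.dist z₂ (s : V) := by
    intro s hs
    obtain ⟨hk1, hk2⟩ := hkey s hs
    have e1 : T'.dist x z₁ = j - 1 := hgv1.1
    have e2 : T'.dist x z₂ = j + 1 := hgv2.1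
    have e3 : T'.dist z₂ y + (j + 1) = p.length := hgv2.2
    have t1 := htri x z₁ (s : V)
    have t2 := htri z₁ z (s : V)
    have t3 := htri y z₂ (s : V)
    have t4 := htri z₂ z (s : V)
    have c1 := hcomm z₂ z
    have c2 := hcomm y z₂
    have c3 := hcomm z y
    omega
  -- contradiction with resolving
  have hfin := hres ⟨z₁, hz1A⟩ ⟨z₂, hz2A⟩ ?_
  · have h0 : (⟨z₁, hz1A⟩ : ↥Aset) = ⟨z₂, hz2A⟩ :=
      (hsub.dist_eq_zero_iff).mp (Nat.le_zero.mp hfin)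
    exact hne (congrArg Subtype.val h0)
  · intro s hs
    rw [dist_induce hT' hsub, dist_induce hT' hsub]
    exact heq12 s (Finset.mem_coe.mp hs)
end

section
/- Let T' be a finite tree, T a subtree of T', r a nonnegative integer such that every vertex of T' is at distance at most r from some vertex of T, and S a set of vertices of T. For a vertex v of T', let v_T denote the vertex of T closest to v. Let u, v be vertices of T' with d(u,v) > 2r, and suppose the vertex v_1 = v_T satisfies: for every vertex v_2 of T with v_2 ≠ v_1 and every integer α, Φ_{T'}(v_1,S) ≠ Φ_{T'}(v_2,S) + α·1, where 1 is the all-ones vector of length |S|. Then Φ_{T'}(u,S) ≠ Φ_{T'}(v,S), i.e. u and v are distinguished by S. -/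
open SimpleGraph

section Aux

variable {V : Type*} {G : SimpleGraph V}

lemma tree_path_length_eq_dist (hT : G.IsTree) {x y : V} (p : G.Walk x y) (hp : p.IsPath) :
    p.length = G.dist x y := by
  obtain ⟨q, hq⟩ := hT.isConnected.exists_walk_length_eq_dist x y
  have := (hT.existsUnique_path x y).unique hp (q.isPath_of_length_eq_dist hq)
  rw [this, hq]

lemma split_dist [DecidableEq V] (hc : G.Connected) {x y z : V} (p : G.Walk x y)
    (hlen : p.length = G.dist x y) (hz : z ∈ p.support) :
    G.dist x z + G.dist z y = G.dist x y := by
  have hspec := p.take_spec hz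
  have hl : (p.takeUntil z hz).length + (p.dropUntil z hz).length = p.length := by
    rw [← SimpleGraph.Walk.length_append, hspec]
  have h1 : G.dist x z ≤ (p.takeUntil z hz).length := SimpleGraph.dist_le _
  have h2 : G.dist z y ≤ (p.dropUntil z hz).length := SimpleGraph.dist_le _
  have h3 : G.dist x y ≤ G.dist x z + G.dist z y := hc.dist_triangle
  omega

lemma adj_dist_ne [DecidableEq V] (hT : G.IsTree) {a b v : V} (h : G.Adj a b) :
    G.dist v a ≠ G.dist v b := by
  intro heq
  obtain ⟨Q, hQ⟩ := hT.isConnected.exists_walk_length_eq_dist v a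
  have hQp : Q.IsPath := Q.isPath_of_length_eq_dist hQ
  have hbQ : b ∉ Q.support := by
    intro hb
    have hsp := split_dist hT.isConnected Q hQ hb
    have hba : G.dist b a = 1 := SimpleGraph.dist_eq_one_iff_adj.2 h.symm
    omega
  have hC : (SimpleGraph.Walk.cons h.symm Q.reverse).IsPath := by
    apply hQp.reverse.cons
    simpa [SimpleGraph.Walk.support_reverse] using hbQ
  have hlen := tree_path_length_eq_dist hT _ hC.reverse
  simp [SimpleGraph.Walk.length_reverse] at hlen
  omega

/-- Key lemma: if `t` is a closest vertex of `A` to `v`, and there is a path from `s`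
to `t` all of whose vertices lie in `A`, then `d(v,s) = d(v,t) + d(t,s)`. -/
lemma key_dist [DecidableEq V] (hT : G.IsTree) (A : Finset V) (v : V) :
    ∀ {s t : V} (W : G.Walk s t), W.IsPath → (∀ x ∈ W.support, x ∈ A) →
      (∀ w ∈ A, G.dist v t ≤ G.dist v w) → G.dist v s = G.dist v t + W.length := by
  intro s t W
  induction W with
  | nil => simp
  | @cons a b t h W' ih =>
    intro hpath hsupp hclosest
    have hW'p : W'.IsPath := ((SimpleGraph.Walk.cons_isPath_iff h W').1 hpath).1
    have haW' : a ∉ W'.support := ((SimpleGraph.Walk.cons_isPath_iff h W').1 hpath).2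
    have hbA : b ∈ A := hsupp b (by simp)
    have haA : a ∈ A := hsupp a (by simp)
    have hvb : G.dist v b = G.dist v t + W'.length :=
      ih hW'p (fun x hx => hsupp x (by simp [hx])) hclosest
    have hba : G.dist b a = 1 := SimpleGraph.dist_eq_one_iff_adj.2 h.symm
    have hab : G.dist a b = 1 := SimpleGraph.dist_eq_one_iff_adj.2 h
    have hupper : G.dist v a ≤ G.dist v b + 1 := by
      have := hT.isConnected.dist_triangle (u := v) (v := b) (w := a)
      omega
    have hlow : G.dist v b ≤ G.dist v a + 1 := by
      have := hT.isConnected.dist_triangle (u := v) (v := a) (w := b)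
      omega
    have hne : G.dist v a ≠ G.dist v b := adj_dist_ne hT h
    rw [SimpleGraph.Walk.length_cons]
    rcases lt_or_gt_of_ne hne with hlt | hgt
    · -- dist v a = dist v b - 1 : derive contradiction
      exfalso
      have hva : G.dist v a + 1 = G.dist v b := by omega
      obtain ⟨Qv, hQv⟩ := hT.isConnected.exists_walk_length_eq_dist v a
      set R1 : G.Walk v b := (SimpleGraph.Walk.cons h.symm Qv.reverse).reverse with hR1
      have hR1len : R1.length = G.dist v b := by
        simp only [hR1, SimpleGraph.Walk.length_reverse, SimpleGraph.Walk.length_cons,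
          SimpleGraph.Walk.length_reverse]
        omega
      have hR1p : R1.IsPath := R1.isPath_of_length_eq_dist hR1len
      obtain ⟨Qv1, hQv1⟩ := hT.isConnected.exists_walk_length_eq_dist v t
      set R2 : G.Walk v b := Qv1.append W'.reverse with hR2
      have hR2len : R2.length = G.dist v b := by
        simp only [hR2, SimpleGraph.Walk.length_append, SimpleGraph.Walk.length_reverse]
        omega
      have hR2p : R2.IsPath := R2.isPath_of_length_eq_dist hR2len
      have hEq : R1 = R2 := (hT.existsUnique_path v b).unique hR1p hR2p
      have haR1 : a ∈ R1.support := by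
        simp only [hR1, SimpleGraph.Walk.support_reverse, List.mem_reverse]
        simp
      rw [hEq, hR2, SimpleGraph.Walk.mem_support_append_iff] at haR1
      rcases haR1 with haQ | haW
      · have hsp := split_dist hT.isConnected Qv1 hQv1 haQ
        have hge := hclosest a haA
        have hat : G.dist a t = 0 := by omega
        have hat' : a = t := (hT.isConnected.dist_eq_zero_iff).1 hat
        subst hat'
        exact haW' W'.end_mem_support
      · rw [SimpleGraph.Walk.support_reverse] at haW
        exact haW' (List.mem_reverse.1 haW)
    · -- dist v a = dist v b + 1
      omega

end Aux

section Main

variable {V : Type*} {G : SimpleGraph V}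

lemma exists_path_in (A : Finset V)
    (hsub : (G.induce ((A : Finset V) : Set V)).Connected) {s t : V}
    (hs : s ∈ A) (ht : t ∈ A) :
    ∃ W : G.Walk s t, W.IsPath ∧ ∀ x ∈ W.support, x ∈ A := by
  obtain ⟨p⟩ := hsub ⟨s, by simpa using hs⟩ ⟨t, by simpa using ht⟩
  classical
  let q : G.Walk s t := p.map (SimpleGraph.Embedding.induce ((A : Finset V) : Set V)).toHom
  refine ⟨q.bypass, q.bypass_isPath, fun x hx => ?_⟩
  have hx' : x ∈ q.support := q.support_bypass_subset hx
  rw [show q.support = _ from SimpleGraph.Walk.support_map _ _] at hx'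
  obtain ⟨y, _, rfl⟩ := List.mem_map.1 hx'
  exact y.2

lemma key_dist' [DecidableEq V] (hT : G.IsTree) (A : Finset V)
    (hsub : (G.induce ((A : Finset V) : Set V)).Connected)
    {v t : V} (ht : t ∈ A) (hclosest : ∀ w ∈ A, G.dist v t ≤ G.dist v w)
    {s : V} (hs : s ∈ A) :
    G.dist v s = G.dist v t + G.dist t s := by
  obtain ⟨W, hWp, hWs⟩ := exists_path_in A hsub hs ht
  have hlen : W.length = G.dist s t := tree_path_length_eq_dist hT W hWp
  have := key_dist hT A v W hWp hWs hclosest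
  rw [this, hlen, SimpleGraph.dist_comm (u := s)]

end Main


/-- Let `T'` be a finite tree, `T` a subtree of `T'` (a connected subgraph,
given by its vertex set `A`), `r` such that every vertex of `T'` is within distance `r`
of `T`, and `S` a set of vertices of `T`. Let `u, v` be vertices with `d(u,v) > 2r`, and
let `v₁` be the vertex of `T` closest to `v`. If the identification vector of `v₁` does
not differ from that of any other vertex of `T` by a constant shift `α·1`, then `u` and
`v` are distinguished by `S`. -/
theorem stmt_7 {V : Type*} [Fintype V] [DecidableEq V] (T' : SimpleGraph V)
    [DecidableRel T'.Adj] (hT' : T'.IsTree) (A : Finset V)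
    (hsub : (T'.induce ((A : Finset V) : Set V)).Connected)
    (r : ℕ) (hr : ∀ x : V, ∃ w ∈ A, T'.dist x w ≤ r)
    (S : Finset V) (hS : S ⊆ A)
    (u v v₁ : V) (hd : 2 * r < T'.dist u v)
    (hv₁ : v₁ ∈ A) (hclosest : ∀ w ∈ A, T'.dist v v₁ ≤ T'.dist v w)
    (hcond : ∀ v₂ ∈ A, v₂ ≠ v₁ → ∀ α : ℤ,
      ¬ (∀ s ∈ S, (T'.dist v₁ s : ℤ) = (T'.dist v₂ s : ℤ) + α)) :
    ∃ s ∈ S, T'.dist u s ≠ T'.dist v s := by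

  by_contra hcon
  push_neg at hcon
  -- closest vertex of A to u
  obtain ⟨u₁, hu₁A, hu₁min⟩ := A.exists_min_image (fun w => T'.dist u w) ⟨v₁, hv₁⟩
  -- distances to the subtree are at most r
  have huu₁ : T'.dist u u₁ ≤ r := by
    obtain ⟨w, hwA, hwr⟩ := hr u
    exact le_trans (hu₁min w hwA) hwr
  have hvv₁ : T'.dist v v₁ ≤ r := by
    obtain ⟨w, hwA, hwr⟩ := hr v
    exact le_trans (hclosest w hwA) hwr
  by_cases hne : u₁ = v₁
  · subst hne
    have h1 : T'.dist u v ≤ T'.dist u u₁ + T'.dist u₁ v :=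
      hT'.isConnected.dist_triangle
    have h2 : T'.dist u₁ v = T'.dist v u₁ := SimpleGraph.dist_comm
    omega
  · refine hcond u₁ hu₁A hne ((T'.dist u u₁ : ℤ) - (T'.dist v v₁ : ℤ)) fun s hs => ?_
    have hsA : s ∈ A := hS hs
    have h1 : T'.dist u s = T'.dist u u₁ + T'.dist u₁ s :=
      key_dist' hT' A hsub hu₁A hu₁min hsA
    have h2 : T'.dist v s = T'.dist v v₁ + T'.dist v₁ s :=
      key_dist' hT' A hsub hv₁ hclosest hsA
    have h3 := hcon s hs
    omega
end
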